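/- arXiv:cond-mat/9411052 — 6 statements merged into one kernel-verified Lean document; each statement's English description precedes it below -/
import Mathlib

section
/- Let μ be a finite complex measure on the real line and F_μ(t) = ∫ e^{itx} dμ(x) its Fourier transform. Then lim_{T→∞} (1/T) ∫_0^T |F_μ(t)|² dt = Σ_{E∈ℝ} |μ({E})|², where the sum runs over the (at most countably many) atoms of μ. -/
/-!
Write `μ = f • ρ` with `ρ = μ₁ + μ₂ + μ₃ + μ₄` and `f ∈ L¹(ρ)`. Expanding `|F(t)|²` as a double
integral and applying Fubini, the Cesàro mean `(1/T) ∫₀^T |F|²` becomes the integral over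
`ρ ⊗ ρ` of `K_T(x - y) f(x) conj(f(y))`, where `K_T(s) = (1/T) ∫₀^T e^{its} dt` has modulus
at most `1` and tends to the indicator of `s = 0`. By dominated convergence the limit is the
integral of `f(x) conj(f(y))` over the diagonal, which only sees the atoms of `ρ` and equals
`∑_E ρ{E}² |f(E)|² = ∑_E |μ{E}|²`.
-/

open MeasureTheory Filter

open Set Topology ComplexConjugate
open scoped Interval

lemma norm_exp_I_mul_mul (t x : ℝ) : ‖Complex.exp (Complex.I * t * x)‖ = 1 := by
  rw [mul_assoc, ← Complex.ofReal_mul, Complex.norm_exp_I_mul_ofReal]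

lemma exp_I_mul_mul_conj (t x y : ℝ) :
    Complex.exp (Complex.I * t * x) * conj (Complex.exp (Complex.I * t * y))
      = Complex.exp (Complex.I * t * (x - y : ℝ)) := by
  rw [← Complex.exp_conj, ← Complex.exp_add]
  congr 1
  simp only [map_mul, Complex.conj_I, Complex.conj_ofReal, Complex.ofReal_sub]
  ring

lemma integrable_exp_I_mul_mul (ν : Measure ℝ) [IsFiniteMeasure ν] (t : ℝ) :
    Integrable (fun x : ℝ => Complex.exp (Complex.I * t * x)) ν :=
  Integrable.of_bound (by fun_prop) 1 (ae_of_all _ fun x => (norm_exp_I_mul_mul t x).le)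

noncomputable def expMean (T s : ℝ) : ℂ :=
  ((1 / T : ℝ) : ℂ) * ∫ t in (0:ℝ)..T, Complex.exp (Complex.I * t * s)

lemma continuous_expMean (T : ℝ) : Continuous (expMean T) := by
  unfold expMean
  fun_prop

lemma norm_expMean_le_one {T : ℝ} (hT : 0 < T) (s : ℝ) : ‖expMean T s‖ ≤ 1 := by
  have hint : ‖∫ t in (0:ℝ)..T, Complex.exp (Complex.I * t * s)‖ ≤ T := by
    simpa [abs_of_pos hT] using intervalIntegral.norm_integral_le_of_norm_le_const
      (a := 0) (b := T) (C := 1) fun t _ => (norm_exp_I_mul_mul t s).le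
  rw [expMean, norm_mul, Complex.norm_real, Real.norm_of_nonneg (by positivity)]
  calc 1 / T * _ ≤ 1 / T * T := by gcongr
    _ = 1 := one_div_mul_cancel hT.ne'

lemma expMean_zero {T : ℝ} (hT : T ≠ 0) : expMean T 0 = 1 := by
  simp [expMean, hT]

lemma expMean_of_ne_zero (T : ℝ) {s : ℝ} (hs : s ≠ 0) :
    expMean T s
      = ((1 / T : ℝ) : ℂ) * ((Complex.exp (Complex.I * s * T) - 1) / (Complex.I * s)) := by
  have hc : Complex.I * s ≠ 0 := mul_ne_zero Complex.I_ne_zero (Complex.ofReal_ne_zero.mpr hs)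
  simp_rw [expMean, mul_right_comm Complex.I _ (s : ℂ), integral_exp_mul_complex hc]
  simp

lemma norm_expMean_le {T : ℝ} (hT : 0 < T) {s : ℝ} (hs : s ≠ 0) :
    ‖expMean T s‖ ≤ 2 / |s| * T⁻¹ := by
  have hnum : ‖Complex.exp (Complex.I * s * T) - 1‖ ≤ 2 := by
    refine (norm_sub_le _ _).trans ?_
    rw [norm_exp_I_mul_mul, norm_one]
    norm_num
  rw [expMean_of_ne_zero T hs, norm_mul, norm_div, Complex.norm_real,
    Real.norm_of_nonneg (by positivity), norm_mul, Complex.norm_I, one_mul, Complex.norm_real,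
    Real.norm_eq_abs]
  calc 1 / T * (_ / |s|) ≤ 1 / T * (2 / |s|) := by gcongr
    _ = 2 / |s| * T⁻¹ := by ring

lemma tendsto_expMean (s : ℝ) :
    Tendsto (fun T => expMean T s) atTop (𝓝 (if s = 0 then 1 else 0)) := by
  split_ifs with hs
  · subst hs
    exact tendsto_const_nhds.congr' <|
      (eventually_ne_atTop 0).mono fun T hT => (expMean_zero hT).symm
  · refine squeeze_zero_norm' ?_ (by simpa using tendsto_inv_atTop_zero.const_mul (2 / |s|))
    filter_upwards [eventually_gt_atTop 0] with T hT using norm_expMean_le hT hs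

lemma ofReal_norm_integral_sq {α : Type*} [MeasurableSpace α] (ρ : Measure α) [SFinite ρ]
    (g : α → ℂ) :
    ((‖∫ x, g x ∂ρ‖ ^ 2 : ℝ) : ℂ) = ∫ p, g p.1 * conj (g p.2) ∂(ρ.prod ρ) := by
  rw [integral_prod_mul g (fun y => conj (g y)), integral_conj, Complex.mul_conj,
    Complex.normSq_eq_norm_sq]

lemma integrable_mul_conj_prod {α : Type*} [MeasurableSpace α] (ρ : Measure α) [SFinite ρ]
    {f : α → ℂ} (hf : Integrable f ρ) :
    Integrable (fun p : α × α => f p.1 * conj (f p.2)) (ρ.prod ρ) :=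
  hf.mul_prod (Complex.conjCLE.integrable_comp_iff.2 hf)

lemma integrable_exp_mul_prod (ρ : Measure ℝ) [IsFiniteMeasure ρ] {g : ℝ × ℝ → ℂ}
    (hg : Integrable g (ρ.prod ρ)) (T : ℝ) :
    Integrable (Function.uncurry fun (t : ℝ) (p : ℝ × ℝ) =>
        Complex.exp (Complex.I * t * (p.1 - p.2 : ℝ)) * g p)
      ((volume.restrict (Ι 0 T)).prod (ρ.prod ρ)) := by
  have : IsFiniteMeasure (volume.restrict (Ι (0:ℝ) T)) :=
    isFiniteMeasure_restrict.2 measure_Ioc_lt_top.ne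
  refine (hg.comp_snd _).bdd_mul (c := 1) (by fun_prop) (ae_of_all _ fun z => ?_)
  exact (norm_exp_I_mul_mul _ _).le

lemma cesaro_norm_sq_integral_exp_eq (ρ : Measure ℝ) [IsFiniteMeasure ρ] {f : ℝ → ℂ}
    (hf : Integrable f ρ) (T : ℝ) :
    (((1 / T) * ∫ t in (0:ℝ)..T, ‖∫ x, Complex.exp (Complex.I * t * x) * f x ∂ρ‖ ^ 2 : ℝ) : ℂ)
      = ∫ p, expMean T (p.1 - p.2) * (f p.1 * conj (f p.2)) ∂(ρ.prod ρ) := by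
  have hsq (t : ℝ) : ((‖∫ x, Complex.exp (Complex.I * t * x) * f x ∂ρ‖ ^ 2 : ℝ) : ℂ)
      = ∫ p, Complex.exp (Complex.I * t * (p.1 - p.2 : ℝ)) * (f p.1 * conj (f p.2))
          ∂(ρ.prod ρ) := by
    rw [ofReal_norm_integral_sq]
    congr 1 with p
    rw [map_mul, ← exp_I_mul_mul_conj]
    ring
  rw [Complex.ofReal_mul, ← intervalIntegral.integral_ofReal]
  simp_rw [hsq,
    intervalIntegral_integral_swap (integrable_exp_mul_prod ρ (integrable_mul_conj_prod ρ hf) T),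
    intervalIntegral.integral_mul_const, ← integral_const_mul, expMean, mul_assoc]

section Atoms

variable {α E : Type*} [MeasurableSpace α] [MeasurableSingletonClass α]
  [NormedAddCommGroup E] [NormedSpace ℝ E] [CompleteSpace E] (ρ : Measure α) [SFinite ρ]

lemma countable_setOf_measure_singleton_pos : {x : α | 0 < ρ {x}}.Countable :=
  Measure.countable_meas_pos_of_disjoint_iUnion (As := fun x : α => {x})
    (fun _ => measurableSet_singleton _) fun _ _ hxy => disjoint_singleton.2 hxy

lemma integral_measureReal_singleton_smul {φ : α → E}
    (hφ : Integrable (fun x => ρ.real {x} • φ x) ρ) :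
    ∫ x, ρ.real {x} • φ x ∂ρ = ∑' x, ρ.real {x} • ρ.real {x} • φ x := by
  set atoms := {x : α | 0 < ρ {x}}
  have hzero (x : α) (hx : x ∉ atoms) : ρ.real {x} = 0 := by
    simp_all [atoms, measureReal_def]
  rw [← setIntegral_eq_integral_of_forall_compl_eq_zero (s := atoms)
      fun x hx => by simp [hzero x hx],
    setIntegral_countable _ (countable_setOf_measure_singleton_pos ρ) hφ.integrableOn]
  refine tsum_subtype_eq_of_support_subset (f := fun x => ρ.real {x} • ρ.real {x} • φ x)
    fun x hx => ?_
  by_contra hxA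
  simp [hzero x hxA] at hx

end Atoms

lemma integral_indicator_diagonal_mul_conj {α : Type*} [MeasurableSpace α]
    [MeasurableSingletonClass α] [MeasurableEq α] (ρ : Measure α) [IsFiniteMeasure ρ] {f : α → ℂ}
    (hf : Integrable f ρ) :
    ∫ p, (diagonal α).indicator (fun p => f p.1 * conj (f p.2)) p ∂(ρ.prod ρ)
      = ∑' x, ((‖ρ.real {x} • f x‖ ^ 2 : ℝ) : ℂ) := by
  have hg : Integrable ((diagonal α).indicator (fun p => f p.1 * conj (f p.2))) (ρ.prod ρ) :=
    (integrable_mul_conj_prod ρ hf).indicator measurableSet_diagonal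
  have hslice (x : α) : ∫ y, (diagonal α).indicator (fun p => f p.1 * conj (f p.2)) (x, y) ∂ρ
      = ρ.real {x} • ((‖f x‖ ^ 2 : ℝ) : ℂ) := by
    have : (fun y => (diagonal α).indicator (fun p => f p.1 * conj (f p.2)) (x, y))
        = ({x} : Set α).indicator fun y => f x * conj (f y) := by
      ext y
      by_cases h : x = y <;> simp [indicator, h, eq_comm]
    rw [this, integral_indicator (measurableSet_singleton x), integral_singleton,
      Complex.mul_conj, Complex.normSq_eq_norm_sq]
  rw [integral_prod _ hg, integral_congr_ae (ae_of_all _ hslice),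
    integral_measureReal_singleton_smul ρ (hg.integral_prod_left.congr (ae_of_all _ hslice))]
  congr 1 with x
  rw [norm_smul, mul_pow, Real.norm_of_nonneg measureReal_nonneg]
  simp only [Complex.real_smul, Complex.ofReal_mul, Complex.ofReal_pow]
  ring

theorem tendsto_cesaro_norm_sq_integral_exp (ρ : Measure ℝ) [IsFiniteMeasure ρ] {f : ℝ → ℂ}
    (hf : Integrable f ρ) :
    Tendsto (fun T : ℝ =>
        (1 / T) * ∫ t in (0:ℝ)..T, ‖∫ x, Complex.exp (Complex.I * t * x) * f x ∂ρ‖ ^ 2)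
      atTop (𝓝 (∑' E, ‖ρ.real {E} • f E‖ ^ 2)) := by
  set g : ℝ × ℝ → ℂ := fun p => f p.1 * conj (f p.2)
  have hg : Integrable g (ρ.prod ρ) := integrable_mul_conj_prod ρ hf
  have hlim (p : ℝ × ℝ) : Tendsto (fun T => expMean T (p.1 - p.2) * g p) atTop
      (𝓝 ((diagonal ℝ).indicator g p)) := by
    have := (tendsto_expMean (p.1 - p.2)).mul_const (g p)
    by_cases hp : p.1 = p.2 <;> simpa [hp, sub_eq_zero, indicator, mem_diagonal_iff] using this
  have hdom : Tendsto (fun T => ∫ p, expMean T (p.1 - p.2) * g p ∂(ρ.prod ρ)) atTop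
      (𝓝 (∫ p, (diagonal ℝ).indicator g p ∂(ρ.prod ρ))) := by
    refine tendsto_integral_filter_of_dominated_convergence (fun p => ‖g p‖)
      (Eventually.of_forall fun T => ?_) ?_ hg.norm (ae_of_all _ hlim)
    · exact ((continuous_expMean T).comp_aestronglyMeasurable (by fun_prop)).mul
        hg.aestronglyMeasurable
    · filter_upwards [eventually_gt_atTop 0] with T hT
      refine ae_of_all _ fun p => ?_
      rw [norm_mul]
      exact mul_le_of_le_one_left (norm_nonneg _) (norm_expMean_le_one hT _)
  rw [← tendsto_ofReal_iff, Complex.ofReal_tsum]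
  simp_rw [cesaro_norm_sq_integral_exp_eq ρ hf]
  rwa [← integral_indicator_diagonal_mul_conj ρ hf]

lemma measureReal_singleton_eq_toReal_rnDeriv_mul {α : Type*} [MeasurableSpace α]
    [MeasurableSingletonClass α] {μ ν : Measure α} [μ.HaveLebesgueDecomposition ν] (hμν : μ ≪ ν)
    (x : α) : μ.real {x} = (μ.rnDeriv ν x).toReal * ν.real {x} := by
  rw [measureReal_def, ← Measure.setLIntegral_rnDeriv' hμν (measurableSet_singleton x),
    lintegral_singleton, ENNReal.toReal_mul, measureReal_def]

section Combination

variable {α ι : Type*} [MeasurableSpace α] [Fintype ι] (ν : ι → Measure α)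

lemma absolutelyContinuous_sum (i : ι) : ν i ≪ ∑ j, ν j :=
  Measure.absolutelyContinuous_of_le <|
    Finset.single_le_sum (fun j _ => Measure.zero_le (ν j)) (Finset.mem_univ i)

variable [∀ i, IsFiniteMeasure (ν i)] (c : ι → ℂ)

/-- The density of `∑ i, c i • ν i` with respect to `∑ i, ν i`. -/
noncomputable def combinationDensity (x : α) : ℂ :=
  ∑ i, c i * ((ν i).rnDeriv (∑ j, ν j) x).toReal

lemma integrable_combinationDensity : Integrable (combinationDensity ν c) (∑ j, ν j) :=
  integrable_finsetSum _ fun _ _ => Measure.integrable_toReal_rnDeriv.ofReal.const_mul _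

lemma integral_mul_combinationDensity {φ : α → ℂ} (hφ : ∀ i, Integrable φ (ν i)) :
    ∫ x, φ x * combinationDensity ν c x ∂(∑ j, ν j) = ∑ i, c i * ∫ x, φ x ∂(ν i) := by
  have hsmul (i : ι) (x : α) : φ x * (c i * ((ν i).rnDeriv (∑ j, ν j) x).toReal)
      = c i * (((ν i).rnDeriv (∑ j, ν j) x).toReal • φ x) := by
    rw [Complex.real_smul]
    ring
  simp_rw [combinationDensity, Finset.mul_sum, hsmul]
  rw [integral_finsetSum _ fun i _ => ((integrable_rnDeriv_smul_iff
    (absolutelyContinuous_sum ν i)).2 (hφ i)).const_mul _]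
  simp_rw [integral_const_mul, integral_rnDeriv_smul (absolutelyContinuous_sum ν _)]

lemma sum_mul_measureReal_singleton [MeasurableSingletonClass α] (x : α) :
    ∑ i, c i * (ν i).real {x} = (∑ j, ν j).real {x} • combinationDensity ν c x := by
  simp_rw [measureReal_singleton_eq_toReal_rnDeriv_mul (absolutelyContinuous_sum ν _) x,
    combinationDensity, Finset.smul_sum, Complex.real_smul]
  refine Finset.sum_congr rfl fun i _ => ?_
  push_cast
  ring

end Combination

/-- Wiener criterion: For a finite complex measure
`μ = μ₁ - μ₂ + i·μ₃ - i·μ₄` on ℝ with Fourier transform `F_μ(t) = ∫ e^{itx} dμ(x)`,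
the Cesàro time averages of `|F_μ(t)|²` converge to the sum of the squared moduli of
the atoms of `μ`:  `lim_{T→∞} (1/T) ∫₀^T |F_μ(t)|² dt = Σ_{E∈ℝ} |μ({E})|²`. -/
theorem wiener_criterion
    (μ₁ μ₂ μ₃ μ₄ : Measure ℝ)
    [IsFiniteMeasure μ₁] [IsFiniteMeasure μ₂] [IsFiniteMeasure μ₃] [IsFiniteMeasure μ₄]
    (μ : Set ℝ → ℂ)
    (hμ : ∀ s : Set ℝ,
      μ s = ((μ₁ s).toReal : ℂ) - ((μ₂ s).toReal : ℂ)
          + Complex.I * ((μ₃ s).toReal : ℂ) - Complex.I * ((μ₄ s).toReal : ℂ))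
    (F : ℝ → ℂ)
    (hF : ∀ t : ℝ,
      F t = (∫ x : ℝ, Complex.exp (Complex.I * t * x) ∂μ₁)
          - (∫ x : ℝ, Complex.exp (Complex.I * t * x) ∂μ₂)
          + Complex.I * (∫ x : ℝ, Complex.exp (Complex.I * t * x) ∂μ₃)
          - Complex.I * (∫ x : ℝ, Complex.exp (Complex.I * t * x) ∂μ₄)) :
    Tendsto (fun T : ℝ => (1 / T) * ∫ t in (0:ℝ)..T, ‖F t‖ ^ 2)
      atTop (nhds (∑' E : ℝ, ‖μ {E}‖ ^ 2)) := by
  set ν : Fin 4 → Measure ℝ := ![μ₁, μ₂, μ₃, μ₄]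
  have : ∀ i, IsFiniteMeasure (ν i) := by
    intro i
    fin_cases i <;> assumption
  set c : Fin 4 → ℂ := ![1, -1, Complex.I, -Complex.I]
  have hF' (t : ℝ) : F t = ∫ x, Complex.exp (Complex.I * t * x) * combinationDensity ν c x
      ∂(∑ j, ν j) := by
    rw [integral_mul_combinationDensity ν c fun i => integrable_exp_I_mul_mul _ t, hF t,
      Fin.sum_univ_four]
    simp only [ν, c, Matrix.cons_val_zero, Matrix.cons_val_one, Matrix.cons_val, one_mul, neg_mul]
    ring
  have hμ' (E : ℝ) : μ {E} = (∑ j, ν j).real {E} • combinationDensity ν c E := by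
    rw [← sum_mul_measureReal_singleton, hμ, Fin.sum_univ_four]
    simp only [ν, c, Matrix.cons_val_zero, Matrix.cons_val_one, Matrix.cons_val, one_mul, neg_mul,
      measureReal_def]
    ring
  simp_rw [hF', hμ']
  exact tendsto_cesaro_norm_sq_integral_exp _ (integrable_combinationDensity ν c)
end

section
/- Let μ and ν be two finite positive measures on a Borel subset Δ of the real line with pure point parts μ_pp and ν_pp. For a finite Borel partition P of Δ define N(Δ,P) = Σ_{Δ'∈P} μ(Δ')ν(Δ'). Then the limit of N(Δ,P) along the net of finite partitions ordered by refinement equals its infimum over all finite partitions, and both equal Σ_{E∈Δ} μ({E})·ν({E}). -/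
open MeasureTheory Filter

/-- A finite Borel partition of the Borel set `Δ ⊆ ℝ` into disjoint Borel pieces. -/
structure BorelPartition (Δ : Set ℝ) where
  pieces : Finset (Set ℝ)
  measurable : ∀ A ∈ pieces, MeasurableSet A
  disj : ∀ A ∈ pieces, ∀ B ∈ pieces, A ≠ B → Disjoint A B
  cover : ⋃ A ∈ pieces, A = Δ

/-- Partitions ordered by refinement: `P ≤ P'` iff every piece of `P'` is contained in
some piece of `P` (i.e. `P'` refines `P`). -/
instance (Δ : Set ℝ) : Preorder (BorelPartition Δ) where
  le P P' := ∀ A ∈ P'.pieces, ∃ B ∈ P.pieces, A ⊆ B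
  le_refl := by
    intro P A hA; exact ⟨A, hA, subset_rfl⟩
  le_trans := by
    intro P Q R hPQ hQR A hA
    obtain ⟨B, hB, hAB⟩ := hQR A hA
    obtain ⟨C, hC, hBC⟩ := hPQ B hB
    exact ⟨C, hC, hAB.trans hBC⟩

/-- `N(Δ,P) = Σ_{Δ'∈P} μ(Δ')·ν(Δ')`. -/
noncomputable def partitionSum (μ ν : Measure ℝ) {Δ : Set ℝ} (P : BorelPartition Δ) : ℝ :=
  ∑ A ∈ P.pieces, (μ A).toReal * (ν A).toReal

namespace PartitionAux

variable {Δ : Set ℝ}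

lemma prod_measure_biUnion (μ ν : Measure ℝ) [SFinite μ] [SFinite ν] (P : BorelPartition Δ) :
    (μ.prod ν) (⋃ A ∈ P.pieces, A ×ˢ A) = ∑ A ∈ P.pieces, μ A * ν A := by
  rw [measure_biUnion_finset ?_ ?_]
  · exact Finset.sum_congr rfl fun A _ => Measure.prod_prod A A
  · intro A hA B hB hAB
    exact Set.disjoint_prod.mpr (Or.inl (P.disj A (Finset.mem_coe.mp hA) B (Finset.mem_coe.mp hB) hAB))
  · intro A hA
    exact (P.measurable A hA).prod (P.measurable A hA)

lemma partitionSum_eq (μ ν : Measure ℝ) [IsFiniteMeasure μ] [IsFiniteMeasure ν]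
    (P : BorelPartition Δ) :
    partitionSum μ ν P = ((μ.prod ν) (⋃ A ∈ P.pieces, A ×ˢ A)).toReal := by
  rw [prod_measure_biUnion,
    ENNReal.toReal_sum (fun A _ => ENNReal.mul_ne_top (measure_ne_top μ A) (measure_ne_top ν A))]
  simp [partitionSum, ENNReal.toReal_mul]

lemma prod_diag (μ ν : Measure ℝ) [IsFiniteMeasure μ] [IsFiniteMeasure ν] :
    (μ.prod ν) (Set.diagonal ℝ) = ∑' x : ℝ, μ {x} * ν {x} := by
  have hd : MeasurableSet (Set.diagonal ℝ) := isClosed_diagonal.measurableSet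
  rw [Measure.prod_apply hd]
  have hpre : ∀ x : ℝ, (Prod.mk x ⁻¹' Set.diagonal ℝ) = {x} := by
    intro x; ext y; simp [Set.diagonal, eq_comm]
  simp_rw [hpre]
  set C : Set ℝ := {x | 0 < ν {x}} with hC
  have hCc : C.Countable :=
    Measure.countable_meas_pos_of_disjoint_iUnion (μ := ν) (As := fun x : ℝ => {x})
      (fun x => measurableSet_singleton x) (fun x y hxy => Set.disjoint_singleton.mpr hxy)
  have hind : (fun x : ℝ => ν {x}) = C.indicator (fun x => ν {x}) := by
    funext x
    by_cases hx : x ∈ C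
    · rw [Set.indicator_of_mem hx]
    · rw [Set.indicator_of_notMem hx]
      simp only [hC, Set.mem_setOf_eq, not_lt, le_zero_iff] at hx
      exact hx
  rw [hind, lintegral_indicator hCc.measurableSet, lintegral_countable _ hCc,
    ← tsum_subtype_eq_of_support_subset (s := C) (f := fun x : ℝ => μ {x} * ν {x}) ?_]
  · exact tsum_congr fun a => mul_comm _ _
  · intro x hx
    simp only [Function.mem_support] at hx
    simp only [hC, Set.mem_setOf_eq, pos_iff_ne_zero]
    intro h0
    exact hx (by rw [h0, mul_zero])

lemma atomSum_eq (μ ν : Measure ℝ) [IsFiniteMeasure μ] [IsFiniteMeasure ν] (hμ : μ Δᶜ = 0) :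
    (∑' E : Δ, (μ {(E : ℝ)}).toReal * (ν {(E : ℝ)}).toReal)
      = ((μ.prod ν) (Set.diagonal ℝ)).toReal := by
  rw [prod_diag,
    ENNReal.tsum_toReal_eq (fun x => ENNReal.mul_ne_top (measure_ne_top μ _) (measure_ne_top ν _))]
  simp_rw [ENNReal.toReal_mul]
  refine tsum_subtype_eq_of_support_subset (f := fun x : ℝ => (μ {x}).toReal * (ν {x}).toReal) (s := Δ) ?_
  intro x hx
  by_contra hxΔ
  have h0 : μ {x} = 0 :=
    measure_mono_null (Set.singleton_subset_iff.mpr hxΔ) hμ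
  rw [Function.mem_support] at hx
  exact hx (by rw [h0]; simp)

lemma lower_bound (μ ν : Measure ℝ) [IsFiniteMeasure μ] [IsFiniteMeasure ν]
    (P : BorelPartition Δ) (hμ : μ Δᶜ = 0) :
    (μ.prod ν) (Set.diagonal ℝ) ≤ (μ.prod ν) (⋃ A ∈ P.pieces, A ×ˢ A) := by
  have hsub : Set.diagonal ℝ ⊆ (⋃ A ∈ P.pieces, A ×ˢ A) ∪ (Δᶜ ×ˢ Set.univ) := by
    rintro ⟨x, y⟩ hxy
    simp only [Set.mem_diagonal_iff] at hxy
    subst hxy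
    by_cases hx : x ∈ Δ
    · left
      rw [← P.cover] at hx
      simp only [Set.mem_iUnion, exists_prop] at hx ⊢
      obtain ⟨A, hA, hxA⟩ := hx
      exact ⟨A, hA, hxA, hxA⟩
    · right; exact ⟨hx, trivial⟩
  calc (μ.prod ν) (Set.diagonal ℝ)
      ≤ (μ.prod ν) ((⋃ A ∈ P.pieces, A ×ˢ A) ∪ Δᶜ ×ˢ Set.univ) := measure_mono hsub
    _ ≤ (μ.prod ν) (⋃ A ∈ P.pieces, A ×ˢ A) + (μ.prod ν) (Δᶜ ×ˢ Set.univ) :=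
        measure_union_le _ _
    _ = (μ.prod ν) (⋃ A ∈ P.pieces, A ×ˢ A) := by
        rw [Measure.prod_prod, hμ, zero_mul, add_zero]

end PartitionAux
namespace PartitionAux

variable {Δ : Set ℝ}

lemma partitionSum_antitone (μ ν : Measure ℝ) [IsFiniteMeasure μ] [IsFiniteMeasure ν]
    {P P' : BorelPartition Δ} (h : P ≤ P') :
    partitionSum μ ν P' ≤ partitionSum μ ν P := by
  classical
  set g : Set ℝ → Set ℝ := fun A =>
    if hA : ∃ B ∈ P.pieces, A ⊆ B then hA.choose else ∅ with hg
  have hgmem : ∀ A ∈ P'.pieces, g A ∈ P.pieces ∧ A ⊆ g A := by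
    intro A hA
    have hA' := h A hA
    rw [hg]
    simp only [dif_pos hA']
    exact ⟨hA'.choose_spec.1, hA'.choose_spec.2⟩
  unfold partitionSum
  rw [← Finset.sum_fiberwise_of_maps_to (g := g) (fun A hA => (hgmem A hA).1)
    (fun A => (μ A).toReal * (ν A).toReal)]
  apply Finset.sum_le_sum
  intro B hB
  have hsub : ∀ A ∈ P'.pieces.filter (fun A => g A = B), A ⊆ B := by
    intro A hA
    rw [Finset.mem_filter] at hA
    exact hA.2 ▸ (hgmem A hA.1).2
  have key : ∑ A ∈ P'.pieces.filter (fun A => g A = B), (μ A).toReal ≤ (μ B).toReal := by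
    rw [← ENNReal.toReal_sum (fun A _ => measure_ne_top μ A)]
    apply ENNReal.toReal_mono (measure_ne_top μ B)
    rw [← measure_biUnion_finset ?_ ?_]
    · exact measure_mono (Set.iUnion₂_subset fun A hA => hsub A hA)
    · intro A hA A' hA' hne
      exact P'.disj A (Finset.mem_filter.mp (Finset.mem_coe.mp hA)).1
        A' (Finset.mem_filter.mp (Finset.mem_coe.mp hA')).1 hne
    · intro A hA
      exact P'.measurable A (Finset.mem_filter.mp hA).1
  calc ∑ A ∈ P'.pieces.filter (fun A => g A = B), (μ A).toReal * (ν A).toReal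
      ≤ ∑ A ∈ P'.pieces.filter (fun A => g A = B), (μ A).toReal * (ν B).toReal := by
        apply Finset.sum_le_sum
        intro A hA
        have hAB := hsub A hA
        have hν : (ν A).toReal ≤ (ν B).toReal :=
          ENNReal.toReal_mono (measure_ne_top ν B) (measure_mono hAB)
        exact mul_le_mul_of_nonneg_left hν ENNReal.toReal_nonneg
    _ = (∑ A ∈ P'.pieces.filter (fun A => g A = B), (μ A).toReal) * (ν B).toReal := by
        rw [Finset.sum_mul]
    _ ≤ (μ B).toReal * (ν B).toReal :=
        mul_le_mul_of_nonneg_right key ENNReal.toReal_nonneg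

noncomputable def gridFun (m M : ℕ) : ℝ → ℤ := fun x =>
  max (-((M : ℤ) * ((m : ℤ) + 1)) - 1) (min ((M : ℤ) * ((m : ℤ) + 1)) ⌊x * ((m : ℝ) + 1)⌋)

lemma gridFun_measurable (m M : ℕ) : Measurable (gridFun m M) := by
  unfold gridFun
  measurability

lemma gridFun_mem (m M : ℕ) (x : ℝ) :
    gridFun m M x ∈ Finset.Icc (-((M : ℤ) * ((m : ℤ) + 1)) - 1) ((M : ℤ) * ((m : ℤ) + 1)) := by
  have h0 : (0:ℤ) ≤ (M : ℤ) * ((m : ℤ) + 1) := by positivity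
  simp only [gridFun, Finset.mem_Icc]
  omega

lemma gridFun_eq_cases (m M : ℕ) {x y : ℝ} (hxy : gridFun m M x = gridFun m M y) :
    |x - y| ≤ 1 / ((m : ℝ) + 1) ∨ (M : ℝ) ≤ |x| := by
  set N : ℤ := (M : ℤ) * ((m : ℤ) + 1) with hN
  have hN0 : (0:ℤ) ≤ N := by positivity
  have hm : (0:ℝ) < (m : ℝ) + 1 := by positivity
  by_cases h1 : gridFun m M x = N
  · right
    have hfl : N ≤ ⌊x * ((m : ℝ) + 1)⌋ := by
      unfold gridFun at h1
      generalize hb : ⌊x * ((m : ℝ) + 1)⌋ = b at *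
      omega
    have hle : (N : ℝ) ≤ x * ((m : ℝ) + 1) := le_trans (by exact_mod_cast hfl) (Int.floor_le _)
    have hcast : (N : ℝ) = (M : ℝ) * ((m : ℝ) + 1) := by push_cast [hN]; ring
    rw [hcast] at hle
    have hMx : (M : ℝ) ≤ x := le_of_mul_le_mul_right (by linarith) hm
    exact le_trans hMx (le_abs_self x)
  by_cases h2 : gridFun m M x = -N - 1
  · right
    have hfl : ⌊x * ((m : ℝ) + 1)⌋ ≤ -N - 1 := by
      unfold gridFun at h2
      generalize hb : ⌊x * ((m : ℝ) + 1)⌋ = b at *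
      omega
    have hlt : x * ((m : ℝ) + 1) < (-N : ℝ) := by
      have := Int.lt_floor_add_one (x * ((m : ℝ) + 1))
      have hc' : (⌊x * ((m : ℝ) + 1)⌋ : ℤ) + 1 ≤ -N := by omega
      have hc : ((⌊x * ((m : ℝ) + 1)⌋ : ℝ) + 1) ≤ (-N : ℝ) := by exact_mod_cast hc'
      linarith
    have hcast : (-N : ℝ) = -((M : ℝ) * ((m : ℝ) + 1)) := by push_cast [hN]; ring
    rw [hcast] at hlt
    have hMx : x < -(M : ℝ) := by nlinarith
    have : (M : ℝ) ≤ -x := by linarith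
    exact le_trans this (neg_le_abs x)
  · left
    have hx : ⌊x * ((m : ℝ) + 1)⌋ = gridFun m M x := by
      unfold gridFun at h1 h2 ⊢
      generalize hb : ⌊x * ((m : ℝ) + 1)⌋ = b at *
      omega
    have hy : ⌊y * ((m : ℝ) + 1)⌋ = gridFun m M x := by
      rw [hxy] at h1 h2 ⊢
      unfold gridFun at h1 h2 ⊢
      generalize hb : ⌊y * ((m : ℝ) + 1)⌋ = b at *
      omega
    have hk : ⌊x * ((m : ℝ) + 1)⌋ = ⌊y * ((m : ℝ) + 1)⌋ := by rw [hx, hy]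
    have hx1 : (⌊x * ((m : ℝ) + 1)⌋ : ℝ) ≤ x * ((m : ℝ) + 1) := Int.floor_le _
    have hx2 : x * ((m : ℝ) + 1) < ⌊x * ((m : ℝ) + 1)⌋ + 1 := Int.lt_floor_add_one _
    have hy1 : (⌊y * ((m : ℝ) + 1)⌋ : ℝ) ≤ y * ((m : ℝ) + 1) := Int.floor_le _
    have hy2 : y * ((m : ℝ) + 1) < ⌊y * ((m : ℝ) + 1)⌋ + 1 := Int.lt_floor_add_one _
    rw [hk] at hx1 hx2
    have hA : x - y < 1 / ((m : ℝ) + 1) := (lt_div_iff₀ hm).mpr (by nlinarith)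
    have hB : y - x < 1 / ((m : ℝ) + 1) := (lt_div_iff₀ hm).mpr (by nlinarith)
    rw [abs_le]
    constructor <;> linarith

attribute [local instance] Classical.propDecidable

noncomputable def gridPartition (Δ : Set ℝ) (hΔ : MeasurableSet Δ) (m M : ℕ) :
    BorelPartition Δ where
  pieces := (Finset.Icc (-((M : ℤ) * ((m : ℤ) + 1)) - 1) ((M : ℤ) * ((m : ℤ) + 1))).image
      (fun k => Δ ∩ gridFun m M ⁻¹' {k})
  measurable := by
    intro A hA
    simp only [Finset.mem_image] at hA
    obtain ⟨k, -, rfl⟩ := hA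
    exact hΔ.inter ((gridFun_measurable m M) (measurableSet_singleton k))
  disj := by
    intro A hA B hB hAB
    simp only [Finset.mem_image] at hA hB
    obtain ⟨k, -, rfl⟩ := hA
    obtain ⟨l, -, rfl⟩ := hB
    have hkl : k ≠ l := by rintro rfl; exact hAB rfl
    refine Set.disjoint_left.mpr ?_
    rintro x ⟨-, hx1⟩ ⟨-, hx2⟩
    exact hkl ((Set.mem_singleton_iff.mp hx1).symm.trans (Set.mem_singleton_iff.mp hx2))
  cover := by
    ext x
    simp only [Set.mem_iUnion, Finset.mem_image, exists_prop]
    constructor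
    · rintro ⟨A, ⟨k, -, rfl⟩, hx⟩
      exact hx.1
    · intro hx
      exact ⟨Δ ∩ gridFun m M ⁻¹' {gridFun m M x},
        ⟨gridFun m M x, gridFun_mem m M x, rfl⟩, hx, rfl⟩

lemma grid_union_subset (Δ : Set ℝ) (hΔ : MeasurableSet Δ) (m M : ℕ) :
    (⋃ A ∈ (gridPartition Δ hΔ m M).pieces, A ×ˢ A) ⊆
      {p : ℝ × ℝ | dist p.1 p.2 ≤ 1 / ((m : ℝ) + 1)} ∪ ({x : ℝ | (M : ℝ) ≤ |x|} ×ˢ Set.univ) := by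
  rintro ⟨x, y⟩ hp
  simp only [Set.mem_iUnion, exists_prop] at hp
  obtain ⟨A, hA, hx, hy⟩ := hp
  simp only [gridPartition, Finset.mem_image] at hA
  obtain ⟨k, -, rfl⟩ := hA
  have h1 : gridFun m M x = k := Set.mem_singleton_iff.mp hx.2
  have h2 : gridFun m M y = k := Set.mem_singleton_iff.mp hy.2
  rcases gridFun_eq_cases m M (h1.trans h2.symm) with h | h
  · left; simpa [Real.dist_eq] using h
  · right; exact ⟨h, trivial⟩

end PartitionAux
namespace PartitionAux

lemma exists_partition_close (Δ : Set ℝ) (hΔ : MeasurableSet Δ) (μ ν : Measure ℝ)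
    [IsFiniteMeasure μ] [IsFiniteMeasure ν] {ε : ℝ} (hε : 0 < ε) :
    ∃ P : BorelPartition Δ,
      partitionSum μ ν P ≤ ((μ.prod ν) (Set.diagonal ℝ)).toReal + ε := by
  set π := μ.prod ν with hπ
  set D := π (Set.diagonal ℝ) with hD
  have hDfin : D ≠ ⊤ := measure_ne_top _ _
  set ε₁ := ENNReal.ofReal (ε / 2) with hε₁def
  have hε₁ : ε₁ ≠ 0 := by
    simp only [hε₁def, ne_eq, ENNReal.ofReal_eq_zero, not_le]
    linarith
  set V : ℕ → Set (ℝ × ℝ) := fun m => {p | dist p.1 p.2 ≤ 1 / ((m : ℝ) + 1)} with hV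
  have hVclosed : ∀ m, IsClosed (V m) :=
    fun m => isClosed_le (continuous_fst.dist continuous_snd) continuous_const
  have hVanti : Antitone V := by
    intro a b hab p hp
    simp only [hV, Set.mem_setOf_eq] at hp ⊢
    refine le_trans hp ?_
    have : (a : ℝ) ≤ (b : ℝ) := Nat.cast_le.mpr hab
    apply one_div_le_one_div_of_le (by positivity)
    linarith
  have hVinter : ⋂ m, V m = Set.diagonal ℝ := by
    ext ⟨x, y⟩
    simp only [Set.mem_iInter, hV, Set.mem_setOf_eq, Set.mem_diagonal_iff]
    constructor
    · intro h
      by_contra hne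
      have hd : 0 < dist x y := dist_pos.mpr (fun hc => hne (by simpa using hc))
      obtain ⟨n, hn⟩ := exists_nat_one_div_lt hd
      exact absurd (h n) (not_le.mpr hn)
    · intro h
      subst h
      intro m
      simp only [dist_self]
      positivity
  have hVtend : Tendsto (π ∘ V) atTop (nhds D) := by
    have := tendsto_measure_iInter_atTop (μ := π) (s := V)
      (fun m => ((hVclosed m).measurableSet).nullMeasurableSet) hVanti ⟨0, measure_ne_top _ _⟩
    rwa [hVinter] at this
  obtain ⟨m, hm⟩ := (hVtend.eventually_lt_const (ENNReal.lt_add_right hDfin hε₁)).exists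
  set T : ℕ → Set ℝ := fun M => {x | (M : ℝ) ≤ |x|} with hT
  have hTclosed : ∀ M, IsClosed (T M) := fun M => isClosed_le continuous_const continuous_abs
  have hTanti : Antitone T := by
    intro a b hab x hx
    simp only [hT, Set.mem_setOf_eq] at hx ⊢
    refine le_trans ?_ hx
    exact_mod_cast hab
  have hTinter : ⋂ M, T M = ∅ := by
    ext x
    simp only [Set.mem_iInter, Set.mem_empty_iff_false, iff_false, not_forall, hT,
      Set.mem_setOf_eq, not_le]
    obtain ⟨n, hn⟩ := exists_nat_gt |x|
    exact ⟨n, hn⟩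
  have hTtend : Tendsto (fun M => μ (T M) * ν Set.univ) atTop (nhds 0) := by
    have h1 : Tendsto (μ ∘ T) atTop (nhds 0) := by
      have := tendsto_measure_iInter_atTop (μ := μ) (s := T)
        (fun M => ((hTclosed M).measurableSet).nullMeasurableSet) hTanti ⟨0, measure_ne_top _ _⟩
      rwa [hTinter, measure_empty] at this
    have h2 := ENNReal.Tendsto.mul_const h1 (Or.inr (measure_ne_top ν Set.univ))
    rwa [zero_mul] at h2
  obtain ⟨M, hM⟩ := (hTtend.eventually_lt_const (pos_iff_ne_zero.mpr hε₁)).exists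
  refine ⟨gridPartition Δ hΔ m M, ?_⟩
  rw [partitionSum_eq]
  have hb : π (⋃ A ∈ (gridPartition Δ hΔ m M).pieces, A ×ˢ A) ≤ D + ε₁ + ε₁ := by
    calc π (⋃ A ∈ (gridPartition Δ hΔ m M).pieces, A ×ˢ A)
        ≤ π (V m ∪ (T M ×ˢ Set.univ)) := measure_mono (grid_union_subset Δ hΔ m M)
      _ ≤ π (V m) + π (T M ×ˢ Set.univ) := measure_union_le _ _
      _ = π (V m) + μ (T M) * ν Set.univ := by rw [hπ, Measure.prod_prod]
      _ ≤ (D + ε₁) + ε₁ := add_le_add hm.le hM.le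
  refine le_trans (ENNReal.toReal_mono ?_ hb) ?_
  · exact ENNReal.add_ne_top.mpr
      ⟨ENNReal.add_ne_top.mpr ⟨hDfin, ENNReal.ofReal_ne_top⟩, ENNReal.ofReal_ne_top⟩
  · rw [ENNReal.toReal_add (ENNReal.add_ne_top.mpr ⟨hDfin, ENNReal.ofReal_ne_top⟩)
      ENNReal.ofReal_ne_top,
      ENNReal.toReal_add hDfin ENNReal.ofReal_ne_top, ENNReal.toReal_ofReal (by linarith)]
    linarith

end PartitionAux

/-- For finite positive measures `μ, ν` carried by a Borel set `Δ`, the limit of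
`N(Δ,P)` along the net of finite Borel partitions of `Δ` ordered by refinement equals its
infimum over all finite partitions, and both equal `Σ_{E∈Δ} μ({E})·ν({E})`, the sum over
atoms (the pure point parts). -/
theorem partition_net_limit_eq_atom_sum
    (Δ : Set ℝ) (hΔ : MeasurableSet Δ)
    (μ ν : Measure ℝ) [IsFiniteMeasure μ] [IsFiniteMeasure ν]
    (hμ : μ Δᶜ = 0) (hν : ν Δᶜ = 0) :
    Tendsto (fun P : BorelPartition Δ => partitionSum μ ν P) atTop
      (nhds (∑' E : Δ, (μ {(E : ℝ)}).toReal * (ν {(E : ℝ)}).toReal)) ∧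
    (⨅ P : BorelPartition Δ, partitionSum μ ν P)
      = ∑' E : Δ, (μ {(E : ℝ)}).toReal * (ν {(E : ℝ)}).toReal := by
  classical
  haveI : Nonempty (BorelPartition Δ) := ⟨⟨{Δ}, by simp [hΔ], by simp, by simp⟩⟩
  set S := ∑' E : Δ, (μ {(E : ℝ)}).toReal * (ν {(E : ℝ)}).toReal with hS
  have hSD : S = ((μ.prod ν) (Set.diagonal ℝ)).toReal := PartitionAux.atomSum_eq μ ν hμ
  have hlow : ∀ P : BorelPartition Δ, S ≤ partitionSum μ ν P := by
    intro P
    rw [hSD, PartitionAux.partitionSum_eq]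
    exact ENNReal.toReal_mono (measure_ne_top _ _) (PartitionAux.lower_bound μ ν P hμ)
  have happrox : ∀ ε : ℝ, 0 < ε → ∃ P : BorelPartition Δ, partitionSum μ ν P ≤ S + ε := by
    intro ε hε
    obtain ⟨P, hP⟩ := PartitionAux.exists_partition_close Δ hΔ μ ν hε
    exact ⟨P, by rw [hSD]; exact hP⟩
  constructor
  · rw [Metric.tendsto_nhds]
    intro ε hε
    obtain ⟨P₀, hP₀⟩ := happrox (ε / 2) (by linarith)
    filter_upwards [Filter.Ici_mem_atTop P₀] with P hP
    have h1 : partitionSum μ ν P ≤ partitionSum μ ν P₀ :=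
      PartitionAux.partitionSum_antitone μ ν hP
    have h2 := hlow P
    rw [Real.dist_eq, abs_lt]
    constructor <;> linarith
  · apply le_antisymm
    · apply le_of_forall_pos_le_add
      intro ε hε
      obtain ⟨P, hP⟩ := happrox ε hε
      refine le_trans (ciInf_le ⟨S, ?_⟩ P) hP
      rintro x ⟨P', rfl⟩
      exact hlow P'
    · exact le_ciInf hlow
end

section
/- If P and Q are orthogonal projections on a Hilbert space with P - Q trace class, then Tr((P-Q)^{2m+1}) is independent of the integer m ≥ 0; in particular if the relative index Index(P,Q) = Tr((P-Q)^{2m+1}) vanishes for one admissible m it vanishes for all. -/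
open scoped InnerProductSpace
noncomputable section

variable {H : Type*} [NormedAddCommGroup H] [InnerProductSpace ℂ H] [CompleteSpace H]

/-- The diagonal trace of an operator computed along a Hilbert basis `b`. -/
def traceAlong {ι : Type*} (b : HilbertBasis ι ℂ H) (T : H →L[ℂ] H) : ℂ :=
  ∑' i, ⟪b i, T (b i)⟫_ℂ

/-- Trace-class membership (the Schatten ideal `L¹(H)`) for a self-adjoint operator `A`:
`Tr(|A|) < ∞`, computed along the Hilbert basis `b` via `|A| = cfc |·| A`. -/
def IsTraceClass {ι : Type*} (b : HilbertBasis ι ℂ H) (A : H →L[ℂ] H) : Prop :=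
  Summable fun i => (⟪b i, (cfc (fun x : ℝ => |x|) A) (b i)⟫_ℂ).re

section Aux

set_option linter.unusedSectionVars false

variable {ι : Type*} (b : HilbertBasis ι ℂ H)

lemma aux_parseval_sq (x : H) : HasSum (fun j => ‖⟪b j, x⟫_ℂ‖^2) (‖x‖^2) := by
  have h := (b.hasSum_inner_mul_inner x x).mapL Complex.reCLM
  simp only [Complex.reCLM_apply] at h
  convert h using 2 with j
  · rw [← inner_conj_symm x (b j), RCLike.conj_mul]; norm_cast
  · rw [inner_self_eq_norm_sq_to_K]; norm_cast

lemma aux_hs_adjoint (T : H →L[ℂ] H) (hT : Summable fun i => ‖T (b i)‖^2) :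
    Summable fun j => ‖(ContinuousLinearMap.adjoint T) (b j)‖^2 := by
  have hrow : ∀ i, HasSum (fun j => ‖⟪b j, T (b i)⟫_ℂ‖^2) (‖T (b i)‖^2) :=
    fun i => aux_parseval_sq b _
  have hprod : Summable (fun p : ι × ι => ‖⟪b p.2, T (b p.1)⟫_ℂ‖^2) := by
    refine (summable_prod_of_nonneg (fun p => sq_nonneg _)).mpr
      ⟨fun i => (hrow i).summable, ?_⟩
    simpa only [fun i => (hrow i).tsum_eq] using hT
  have hswap : Summable (fun p : ι × ι => ‖⟪b p.1, T (b p.2)⟫_ℂ‖^2) := by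
    have := hprod.prod_symm
    simpa [Prod.swap] using this
  have hcol : ∀ j, HasSum (fun i => ‖⟪b j, T (b i)⟫_ℂ‖^2)
      (‖(ContinuousLinearMap.adjoint T) (b j)‖^2) := by
    intro j
    have h2 := aux_parseval_sq b ((ContinuousLinearMap.adjoint T) (b j))
    convert h2 using 2 with i
    rw [← ContinuousLinearMap.adjoint_inner_left, norm_inner_symm]
  have h2 := ((summable_prod_of_nonneg (fun p => sq_nonneg _)).mp hswap).2
  convert h2 using 1
  funext j
  exact ((hcol j).tsum_eq).symm

lemma aux_hs_symm (G K : H →L[ℂ] H) (hG : Summable fun i => ‖G (b i)‖^2)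
    (hK : Summable fun i => ‖K (b i)‖^2) :
    (Summable fun i => ⟪G (b i), K (b i)⟫_ℂ) ∧
    ∑' i, ⟪G (b i), K (b i)⟫_ℂ
      = ∑' j, ⟪(ContinuousLinearMap.adjoint K) (b j),
          (ContinuousLinearMap.adjoint G) (b j)⟫_ℂ := by
  have hbound : Summable (fun i => (‖G (b i)‖^2 + ‖K (b i)‖^2) / 2) := by
    apply Summable.div_const; exact hG.add hK
  constructor
  · apply Summable.of_norm
    apply Summable.of_nonneg_of_le (fun i => norm_nonneg _) _ hbound
    intro i
    calc ‖⟪G (b i), K (b i)⟫_ℂ‖ ≤ ‖G (b i)‖ * ‖K (b i)‖ := norm_inner_le_norm _ _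
    _ ≤ (‖G (b i)‖^2 + ‖K (b i)‖^2) / 2 := by nlinarith [sq_nonneg (‖G (b i)‖ - ‖K (b i)‖)]
  · have hF : Summable (Function.uncurry fun i j => ⟪G (b i), b j⟫_ℂ * ⟪b j, K (b i)⟫_ℂ) := by
      apply Summable.of_norm
      have hFb : Summable (fun p : ι × ι =>
          (‖⟪b p.2, G (b p.1)⟫_ℂ‖^2 + ‖⟪b p.2, K (b p.1)⟫_ℂ‖^2) / 2) := by
        refine (summable_prod_of_nonneg ?_).mpr ⟨?_, ?_⟩
        · intro p; positivity
        · intro i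
          exact (((aux_parseval_sq b (G (b i))).add
            (aux_parseval_sq b (K (b i)))).div_const 2).summable
        · convert hbound using 1
          funext i
          exact (((aux_parseval_sq b (G (b i))).add
            (aux_parseval_sq b (K (b i)))).div_const 2).tsum_eq
      apply Summable.of_nonneg_of_le (fun p => norm_nonneg _) _ hFb
      rintro ⟨i, j⟩
      simp only [Function.uncurry, norm_mul]
      calc ‖⟪G (b i), b j⟫_ℂ‖ * ‖⟪b j, K (b i)⟫_ℂ‖
          = ‖⟪b j, G (b i)⟫_ℂ‖ * ‖⟪b j, K (b i)⟫_ℂ‖ := by rw [norm_inner_symm]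
        _ ≤ (‖⟪b j, G (b i)⟫_ℂ‖^2 + ‖⟪b j, K (b i)⟫_ℂ‖^2) / 2 := by
            nlinarith [sq_nonneg (‖⟪b j, G (b i)⟫_ℂ‖ - ‖⟪b j, K (b i)⟫_ℂ‖)]
    calc ∑' i, ⟪G (b i), K (b i)⟫_ℂ
        = ∑' i, ∑' j, ⟪G (b i), b j⟫_ℂ * ⟪b j, K (b i)⟫_ℂ := by
          congr 1; funext i; exact (b.tsum_inner_mul_inner _ _).symm
      _ = ∑' j, ∑' i, ⟪G (b i), b j⟫_ℂ * ⟪b j, K (b i)⟫_ℂ := (Summable.tsum_comm hF).symm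
      _ = ∑' j, ⟪(ContinuousLinearMap.adjoint K) (b j),
            (ContinuousLinearMap.adjoint G) (b j)⟫_ℂ := by
          congr 1; funext j
          have h3 := b.tsum_inner_mul_inner ((ContinuousLinearMap.adjoint K) (b j))
            ((ContinuousLinearMap.adjoint G) (b j))
          rw [← h3]
          congr 1; funext i
          rw [ContinuousLinearMap.adjoint_inner_left, ← ContinuousLinearMap.adjoint_inner_right]
          ring

lemma aux_cfc_split (A : H →L[ℂ] H) (hA : IsSelfAdjoint A) (hTC : IsTraceClass b A) :
    ∃ Rp Rm : H →L[ℂ] H, IsSelfAdjoint Rp ∧ IsSelfAdjoint Rm ∧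
      (Summable fun i => ‖Rp (b i)‖^2) ∧ (Summable fun i => ‖Rm (b i)‖^2) ∧
      Rp * Rp - Rm * Rm = A := by
  set fp : ℝ → ℝ := fun x => Real.sqrt (max x 0) with hfp
  set fm : ℝ → ℝ := fun x => Real.sqrt (max (-x) 0) with hfm
  have hfpc : Continuous fp := by fun_prop
  have hfmc : Continuous fm := by fun_prop
  set Rp := cfc fp A with hRp
  set Rm := cfc fm A with hRm
  have hRpsa : IsSelfAdjoint Rp := cfc_predicate fp A
  have hRmsa : IsSelfAdjoint Rm := cfc_predicate fm A
  have hmulp : Rp * Rp = cfc (fun x : ℝ => max x 0) A := by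
    rw [hRp, ← cfc_mul fp fp A hfpc.continuousOn hfpc.continuousOn]
    congr 1
    funext x
    exact Real.mul_self_sqrt (le_max_right x 0)
  have hmulm : Rm * Rm = cfc (fun x : ℝ => max (-x) 0) A := by
    rw [hRm, ← cfc_mul fm fm A hfmc.continuousOn hfmc.continuousOn]
    congr 1
    funext x
    exact Real.mul_self_sqrt (le_max_right (-x) 0)
  have hsplit : Rp * Rp - Rm * Rm = A := by
    rw [hmulp, hmulm, ← cfc_sub (fun x : ℝ => max x 0) (fun x : ℝ => max (-x) 0) A
      (by fun_prop) (by fun_prop)]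
    have : (fun x : ℝ => max x 0 - max (-x) 0) = fun x : ℝ => x := by
      funext x
      rcases le_total x 0 with h | h
      · rw [max_eq_right h, max_eq_left (by linarith)]; ring
      · rw [max_eq_left h, max_eq_right (by linarith)]; ring
    rw [this, cfc_id' ℝ A]
  have habs : cfc (fun x : ℝ => |x|) A = Rp * Rp + Rm * Rm := by
    rw [hmulp, hmulm, ← cfc_add A (fun x : ℝ => max x 0) (fun x : ℝ => max (-x) 0)
      (by fun_prop) (by fun_prop)]
    congr 1
    funext x
    rcases le_total x 0 with h | h
    · rw [abs_of_nonpos h, max_eq_right h, max_eq_left (by linarith)]; ring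
    · rw [abs_of_nonneg h, max_eq_left h, max_eq_right (by linarith)]; ring
  have hdiag : ∀ i, (⟪b i, (cfc (fun x : ℝ => |x|) A) (b i)⟫_ℂ).re
      = ‖Rp (b i)‖^2 + ‖Rm (b i)‖^2 := by
    intro i
    rw [habs]
    have h1 : ⟪b i, (Rp * Rp + Rm * Rm) (b i)⟫_ℂ
        = ⟪Rp (b i), Rp (b i)⟫_ℂ + ⟪Rm (b i), Rm (b i)⟫_ℂ := by
      simp only [ContinuousLinearMap.add_apply, ContinuousLinearMap.mul_apply,
        inner_add_right]
      rw [← ContinuousLinearMap.adjoint_inner_left Rp,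
        ← ContinuousLinearMap.adjoint_inner_left Rm,
        ← ContinuousLinearMap.star_eq_adjoint, ← ContinuousLinearMap.star_eq_adjoint,
        hRpsa.star_eq, hRmsa.star_eq]
    rw [h1]
    simp only [Complex.add_re]
    rw [inner_self_eq_norm_sq_to_K, inner_self_eq_norm_sq_to_K]
    norm_cast
  have hsum : Summable fun i => ‖Rp (b i)‖^2 + ‖Rm (b i)‖^2 := by
    have h2 := hTC
    unfold IsTraceClass at h2
    simpa only [hdiag] using h2
  refine ⟨Rp, Rm, hRpsa, hRmsa, ?_, ?_, hsplit⟩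
  · apply Summable.of_nonneg_of_le (fun i => sq_nonneg _) _ hsum
    intro i; nlinarith [sq_nonneg (‖Rm (b i)‖)]
  · apply Summable.of_nonneg_of_le (fun i => sq_nonneg _) _ hsum
    intro i; nlinarith [sq_nonneg (‖Rp (b i)‖)]

lemma aux_mid (R X Y : H →L[ℂ] H) (hR : IsSelfAdjoint R)
    (hHS : Summable fun i => ‖R (b i)‖^2) :
    (Summable fun i => ⟪b i, (X * (R * R) * Y) (b i)⟫_ℂ) ∧
    ∑' i, ⟪b i, (X * (R * R) * Y) (b i)⟫_ℂ
      = ∑' j, ⟪b j, (R * (Y * X) * R) (b j)⟫_ℂ := by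
  have hRadj : ContinuousLinearMap.adjoint R = R := by
    rw [← ContinuousLinearMap.star_eq_adjoint, hR.star_eq]
  set G : H →L[ℂ] H := R * ContinuousLinearMap.adjoint X with hG
  set K : H →L[ℂ] H := R * Y with hK
  have hGadj : ContinuousLinearMap.adjoint G = X * R := by
    rw [hG, ← ContinuousLinearMap.star_eq_adjoint, star_mul,
      ContinuousLinearMap.star_eq_adjoint, ContinuousLinearMap.star_eq_adjoint,
      ContinuousLinearMap.adjoint_adjoint, hRadj]
  have hKadj : ContinuousLinearMap.adjoint K = ContinuousLinearMap.adjoint Y * R := by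
    rw [hK, ← ContinuousLinearMap.star_eq_adjoint, star_mul,
      ContinuousLinearMap.star_eq_adjoint, ContinuousLinearMap.star_eq_adjoint, hRadj]
  have hcompHS : ∀ Z : H →L[ℂ] H, Summable fun i => ‖(Z * R) (b i)‖^2 := by
    intro Z
    apply Summable.of_nonneg_of_le (fun i => sq_nonneg _) _ (hHS.mul_left (‖Z‖^2))
    intro i
    simp only [ContinuousLinearMap.mul_apply]
    calc ‖Z (R (b i))‖^2 ≤ (‖Z‖ * ‖R (b i)‖)^2 := by
          apply pow_le_pow_left₀ (norm_nonneg _) (Z.le_opNorm _)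
      _ = ‖Z‖^2 * ‖R (b i)‖^2 := by ring
  have hGHS : Summable fun i => ‖G (b i)‖^2 := by
    have h2 := aux_hs_adjoint b (X * R) (hcompHS X)
    rwa [show ContinuousLinearMap.adjoint (X * R) = G by
      rw [← ContinuousLinearMap.star_eq_adjoint, star_mul,
        ContinuousLinearMap.star_eq_adjoint, ContinuousLinearMap.star_eq_adjoint,
        hRadj]] at h2
  have hKHS : Summable fun i => ‖K (b i)‖^2 := by
    have h2 := aux_hs_adjoint b (ContinuousLinearMap.adjoint Y * R) (hcompHS _)
    rwa [show ContinuousLinearMap.adjoint (ContinuousLinearMap.adjoint Y * R) = K by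
      rw [← ContinuousLinearMap.star_eq_adjoint, star_mul,
        ContinuousLinearMap.star_eq_adjoint, ContinuousLinearMap.star_eq_adjoint, hRadj,
        ContinuousLinearMap.adjoint_adjoint]] at h2
  have hRsym : ∀ u v : H, ⟪R u, v⟫_ℂ = ⟪u, R v⟫_ℂ := by
    intro u v
    conv_lhs => rw [← hRadj]
    rw [ContinuousLinearMap.adjoint_inner_left]
  have hdiag : ∀ i, ⟪b i, (X * (R * R) * Y) (b i)⟫_ℂ = ⟪G (b i), K (b i)⟫_ℂ := by
    intro i
    simp only [hG, hK, ContinuousLinearMap.mul_apply]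
    rw [hRsym, ContinuousLinearMap.adjoint_inner_left X]
  have hdiag2 : ∀ j, ⟪(ContinuousLinearMap.adjoint K) (b j),
      (ContinuousLinearMap.adjoint G) (b j)⟫_ℂ = ⟪b j, (R * (Y * X) * R) (b j)⟫_ℂ := by
    intro j
    rw [hGadj, hKadj]
    simp only [ContinuousLinearMap.mul_apply]
    rw [ContinuousLinearMap.adjoint_inner_left Y, hRsym]
  obtain ⟨hsumm, heq⟩ := aux_hs_symm b G K hGHS hKHS
  constructor
  · simpa only [hdiag] using hsumm
  · calc ∑' i, ⟪b i, (X * (R * R) * Y) (b i)⟫_ℂ = ∑' i, ⟪G (b i), K (b i)⟫_ℂ := by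
          simp only [hdiag]
      _ = _ := by rw [heq]; simp only [hdiag2]

lemma aux_trace_cyclic (A X Y : H →L[ℂ] H) (hA : IsSelfAdjoint A)
    (hTC : IsTraceClass b A) :
    (Summable fun i => ⟪b i, (X * A * Y) (b i)⟫_ℂ) ∧
    ∑' i, ⟪b i, (X * A * Y) (b i)⟫_ℂ = ∑' i, ⟪b i, ((Y * X) * A) (b i)⟫_ℂ := by
  obtain ⟨Rp, Rm, hpsa, hmsa, hps, hms, hsplit⟩ := aux_cfc_split b A hA hTC
  have e1 : X * A * Y = X * (Rp * Rp) * Y - X * (Rm * Rm) * Y := by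
    rw [← hsplit, mul_sub, sub_mul]
  have e2 : (Y * X) * A = (Y * X) * (Rp * Rp) * 1 - (Y * X) * (Rm * Rm) * 1 := by
    rw [← hsplit, mul_sub, mul_one, mul_one]
  obtain ⟨s1, q1⟩ := aux_mid b Rp X Y hpsa hps
  obtain ⟨s2, q2⟩ := aux_mid b Rm X Y hmsa hms
  obtain ⟨s3, q3⟩ := aux_mid b Rp (Y * X) 1 hpsa hps
  obtain ⟨s4, q4⟩ := aux_mid b Rm (Y * X) 1 hmsa hms
  have d1 : ∀ i, ⟪b i, (X * A * Y) (b i)⟫_ℂ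
      = ⟪b i, (X * (Rp * Rp) * Y) (b i)⟫_ℂ - ⟪b i, (X * (Rm * Rm) * Y) (b i)⟫_ℂ := by
    intro i
    rw [e1]
    simp only [ContinuousLinearMap.sub_apply, inner_sub_right]
  have d2 : ∀ i, ⟪b i, ((Y * X) * A) (b i)⟫_ℂ
      = ⟪b i, ((Y * X) * (Rp * Rp) * 1) (b i)⟫_ℂ
        - ⟪b i, ((Y * X) * (Rm * Rm) * 1) (b i)⟫_ℂ := by
    intro i
    rw [e2]
    simp only [ContinuousLinearMap.sub_apply, inner_sub_right]
  constructor
  · simpa only [← d1] using s1.sub s2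
  · have hone : ∀ S : H →L[ℂ] H, S * (1 * (Y * X)) * S = S * (Y * X) * S := by
      intro S; rw [one_mul]
    calc ∑' i, ⟪b i, (X * A * Y) (b i)⟫_ℂ
        = ∑' i, (⟪b i, (X * (Rp * Rp) * Y) (b i)⟫_ℂ
            - ⟪b i, (X * (Rm * Rm) * Y) (b i)⟫_ℂ) := by simp only [d1]
      _ = ∑' i, ⟪b i, (X * (Rp * Rp) * Y) (b i)⟫_ℂ
            - ∑' i, ⟪b i, (X * (Rm * Rm) * Y) (b i)⟫_ℂ := Summable.tsum_sub s1 s2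
      _ = ∑' i, ⟪b i, ((Y * X) * (Rp * Rp) * 1) (b i)⟫_ℂ
            - ∑' i, ⟪b i, ((Y * X) * (Rm * Rm) * 1) (b i)⟫_ℂ := by
          rw [q1, q2, q3, q4, hone Rp, hone Rm]
      _ = ∑' i, (⟪b i, ((Y * X) * (Rp * Rp) * 1) (b i)⟫_ℂ
            - ⟪b i, ((Y * X) * (Rm * Rm) * 1) (b i)⟫_ℂ) := (Summable.tsum_sub s3 s4).symm
      _ = ∑' i, ⟪b i, ((Y * X) * A) (b i)⟫_ℂ := by simp only [← d2]

end Aux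

/-- if `P` and `Q` are orthogonal projections with `P - Q` trace class, then
`Tr((P-Q)^{2m+1})` is independent of the integer `m ≥ 0`; in particular, if the relative
index `Index(P,Q) = Tr((P-Q)^{2m+1})` vanishes for one admissible `m`, it vanishes for all. -/
theorem trace_odd_power_independent {ι : Type*} (b : HilbertBasis ι ℂ H)
    (P Q : H →L[ℂ] H)
    (hP2 : P * P = P) (hPsa : ContinuousLinearMap.adjoint P = P)
    (hQ2 : Q * Q = Q) (hQsa : ContinuousLinearMap.adjoint Q = Q)
    (hPQ : IsTraceClass b (P - Q)) :
    (∀ m m' : ℕ,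
      traceAlong b ((P - Q) ^ (2 * m + 1)) = traceAlong b ((P - Q) ^ (2 * m' + 1))) ∧
    ((∃ m : ℕ, traceAlong b ((P - Q) ^ (2 * m + 1)) = 0) →
      ∀ m : ℕ, traceAlong b ((P - Q) ^ (2 * m + 1)) = 0) := by
  set A : H →L[ℂ] H := P - Q with hA
  set B : H →L[ℂ] H := 1 - P - Q with hB
  have hAsa : IsSelfAdjoint A := by
    rw [IsSelfAdjoint, hA, star_sub, ContinuousLinearMap.star_eq_adjoint,
      ContinuousLinearMap.star_eq_adjoint, hPsa, hQsa]
  -- algebraic identities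
  have expand1 : B * A = P * Q - Q * P := by
    rw [hB, hA]
    simp only [sub_mul, mul_sub, one_mul, mul_one]
    rw [hP2, hQ2]
    abel
  have expand2 : A * B = Q * P - P * Q := by
    rw [hB, hA]
    simp only [sub_mul, mul_sub, one_mul, mul_one]
    rw [hP2, hQ2]
    abel
  have hBA : B * A = -(A * B) := by rw [expand1, expand2, neg_sub]
  have hsum0 : A * A + B * B = 1 := by
    rw [hA, hB]
    simp only [sub_mul, mul_sub, one_mul, mul_one]
    rw [hP2, hQ2]
    abel
  have hsum1 : A * A = 1 - B * B := eq_sub_of_add_eq hsum0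
  have hcommB2 : B * B * A = A * (B * B) := by
    calc B * B * A = B * (B * A) := by rw [mul_assoc]
      _ = B * (-(A * B)) := by rw [hBA]
      _ = -(B * (A * B)) := by rw [mul_neg]
      _ = -((B * A) * B) := by rw [mul_assoc]
      _ = -((-(A * B)) * B) := by rw [hBA]
      _ = (A * B) * B := by rw [neg_mul, neg_neg]
      _ = A * (B * B) := by rw [mul_assoc]
  have hcommA2 : Commute B (A ^ 2) := by
    have : B * (A * A) = (A * A) * B := by
      calc B * (A * A) = (B * A) * A := by rw [mul_assoc]
        _ = (-(A * B)) * A := by rw [hBA]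
        _ = -(A * (B * A)) := by rw [neg_mul, mul_assoc]
        _ = -(A * (-(A * B))) := by rw [hBA]
        _ = A * (A * B) := by rw [mul_neg, neg_neg]
        _ = (A * A) * B := by rw [mul_assoc]
    rw [Commute, SemiconjBy, sq]
    exact this
  have hBpow : ∀ m : ℕ, B * (A ^ (2 * m)) = (A ^ (2 * m)) * B := by
    intro m
    have h2 : Commute B ((A ^ 2) ^ m) := hcommA2.pow_right m
    rw [pow_mul]
    exact h2
  -- the key vanishing lemma
  have key : ∀ m : ℕ,
      (Summable fun i => ⟪b i, ((A ^ (2 * m + 1)) * (B * B)) (b i)⟫_ℂ) ∧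
      ∑' i, ⟪b i, ((A ^ (2 * m + 1)) * (B * B)) (b i)⟫_ℂ = 0 := by
    intro m
    set X : H →L[ℂ] H := A ^ (2 * m) * B with hX
    set Y : H →L[ℂ] H := B with hY
    have key1 : X * A * Y = -((A ^ (2 * m + 1)) * (B * B)) := by
      calc X * A * Y = A ^ (2 * m) * (B * A) * B := by rw [hX, hY, mul_assoc (A ^ (2*m)) B A]
        _ = A ^ (2 * m) * (-(A * B)) * B := by rw [hBA]
        _ = -(A ^ (2 * m) * (A * B) * B) := by rw [mul_neg, neg_mul]
        _ = -((A ^ (2 * m) * A) * (B * B)) := by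
              rw [← mul_assoc (A ^ (2*m)) A B, mul_assoc (A ^ (2*m) * A) B B]
        _ = -((A ^ (2 * m + 1)) * (B * B)) := by rw [pow_succ]
    have key2 : (Y * X) * A = (A ^ (2 * m + 1)) * (B * B) := by
      calc (Y * X) * A = (B * A ^ (2 * m)) * B * A := by rw [hY, hX, ← mul_assoc]
        _ = (A ^ (2 * m) * B) * B * A := by rw [hBpow]
        _ = A ^ (2 * m) * (B * B * A) := by rw [mul_assoc, mul_assoc, ← mul_assoc B B A]
        _ = A ^ (2 * m) * (A * (B * B)) := by rw [hcommB2]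
        _ = (A ^ (2 * m) * A) * (B * B) := by rw [mul_assoc]
        _ = (A ^ (2 * m + 1)) * (B * B) := by rw [pow_succ]
    obtain ⟨hs, heq⟩ := aux_trace_cyclic b A X Y hAsa hPQ
    rw [key1] at hs heq
    rw [key2] at heq
    have hsneg : Summable fun i => ⟪b i, ((A ^ (2 * m + 1)) * (B * B)) (b i)⟫_ℂ := by
      have := hs.neg
      simpa only [ContinuousLinearMap.neg_apply, inner_neg_right, neg_neg] using this
    constructor
    · exact hsneg
    · have hneg : ∑' i, ⟪b i, (-((A ^ (2 * m + 1)) * (B * B))) (b i)⟫_ℂ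
          = -∑' i, ⟪b i, ((A ^ (2 * m + 1)) * (B * B)) (b i)⟫_ℂ := by
        rw [← tsum_neg]
        congr 1; funext i
        simp only [ContinuousLinearMap.neg_apply, inner_neg_right]
      rw [hneg] at heq
      -- heq : -(T) = T
      have := heq
      linear_combination (-1/2 : ℂ) * this
  -- summability of the diagonal of odd powers
  have hsummodd : ∀ m : ℕ, Summable fun i => ⟪b i, (A ^ (2 * m + 1)) (b i)⟫_ℂ := by
    intro m
    have h := (aux_trace_cyclic b A (A ^ (2 * m)) 1 hAsa hPQ).1
    have e : A ^ (2 * m) * A * 1 = A ^ (2 * m + 1) := by rw [mul_one, pow_succ]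
    rwa [e] at h
  -- main step
  have step : ∀ m : ℕ, traceAlong b (A ^ (2 * (m + 1) + 1)) = traceAlong b (A ^ (2 * m + 1)) := by
    intro m
    have epow : A ^ (2 * (m + 1) + 1) = A ^ (2 * m + 1) - (A ^ (2 * m + 1)) * (B * B) := by
      have h1 : 2 * (m + 1) + 1 = (2 * m + 1) + 2 := by ring
      rw [h1, pow_add, sq, hsum1, mul_sub, mul_one]
    unfold traceAlong
    rw [epow]
    have : ∀ i, ⟪b i, (A ^ (2 * m + 1) - (A ^ (2 * m + 1)) * (B * B)) (b i)⟫_ℂ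
        = ⟪b i, (A ^ (2 * m + 1)) (b i)⟫_ℂ
          - ⟪b i, ((A ^ (2 * m + 1)) * (B * B)) (b i)⟫_ℂ := by
      intro i
      simp only [ContinuousLinearMap.sub_apply, inner_sub_right]
    calc ∑' i, ⟪b i, (A ^ (2 * m + 1) - (A ^ (2 * m + 1)) * (B * B)) (b i)⟫_ℂ
        = ∑' i, (⟪b i, (A ^ (2 * m + 1)) (b i)⟫_ℂ
            - ⟪b i, ((A ^ (2 * m + 1)) * (B * B)) (b i)⟫_ℂ) := by simp only [this]
      _ = ∑' i, ⟪b i, (A ^ (2 * m + 1)) (b i)⟫_ℂ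
            - ∑' i, ⟪b i, ((A ^ (2 * m + 1)) * (B * B)) (b i)⟫_ℂ :=
          Summable.tsum_sub (hsummodd m) (key m).1
      _ = ∑' i, ⟪b i, (A ^ (2 * m + 1)) (b i)⟫_ℂ := by rw [(key m).2, sub_zero]
  have ind : ∀ m : ℕ, traceAlong b (A ^ (2 * m + 1)) = traceAlong b (A ^ (2 * 0 + 1)) := by
    intro m
    induction m with
    | zero => rfl
    | succ n ih => rw [step n, ih]
  constructor
  · intro m m'
    rw [ind m, ind m']
  · rintro ⟨m, hm⟩ m'
    rw [ind m']
    rw [ind m] at hm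
    exact hm
end
end

section
/- Let H be a bounded self-adjoint operator with spectral projections, let E_F be a point that is not an eigenvalue of H, and let P_F be the spectral projection of H onto energies ≤ E_F. Suppose ∂ᵢ is a derivation (given by ∂ᵢA = -i[Xᵢ,A]) such that ∂ᵢP_F and ∂ᵢH are well defined. Then P_F L_H^{-1}(∂ᵢH)(1-P_F) = -iℏ P_F (∂ᵢP_F)(1-P_F) and (1-P_F) L_H^{-1}(∂ᵢH) P_F = iℏ (1-P_F)(∂ᵢP_F) P_F, where L_H(A) = (i/ℏ)[H,A] and L_H^{-1} is its inverse on the space of operators mapping Ran(P_F) to Ran(1-P_F) and vice versa. -/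
/-!
Differentiating `H P = P H` gives `⁅H, ∂P⁆ = ⁅P, ∂H⁆`. Compressing this identity to the corner
`P · (1 - P)`, which `⁅H, ·⁆` preserves because `H` commutes with `P`, shows that `P (∂P) (1 - P)`
solves `⁅H, B⁆ = P (∂H) (1 - P)`, and compressing to `(1 - P) · P` shows that `(1 - P) (∂P) P`
solves `⁅H, B⁆ = -(1 - P) (∂H) P`. Both solutions are off-diagonal, and on off-diagonal operators
`⁅H, ·⁆` is injective, so they are the only ones; the factors `∓iℏ` undo the prefactor `i/ℏ`.
-/

section Corner

variable {A : Type*} [Ring A]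

attribute [local instance] LieRing.ofAssociativeRing

theorem lie_deriv_eq_of_commute {d : A → A} (hleib : ∀ x y : A, d (x * y) = d x * y + x * d y)
    {H Q : A} (h : Commute H Q) : ⁅H, d Q⁆ = ⁅Q, d H⁆ := by
  have hdiff : d H * Q + H * d Q = d Q * H + Q * d H := by rw [← hleib, h.eq, hleib]
  rw [Ring.lie_def, Ring.lie_def, sub_eq_sub_iff_add_eq_add, add_comm, hdiff, add_comm]

theorem lie_mul_mul_of_commute {H P R : A} (hP : Commute H P) (hR : Commute H R) (Y : A) :
    ⁅H, P * Y * R⁆ = P * ⁅H, Y⁆ * R := by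
  rw [Ring.lie_def, Ring.lie_def]
  calc H * (P * Y * R) - P * Y * R * H = (H * P) * Y * R - P * Y * (R * H) := by noncomm_ring
    _ = P * (H * Y - Y * H) * R := by rw [hP.eq, hR.eq.symm]; noncomm_ring

theorem IsIdempotentElem.mul_lie_mul_one_sub {Q : A} (hQ : IsIdempotentElem Q) (Y : A) :
    Q * ⁅Q, Y⁆ * (1 - Q) = Q * Y * (1 - Q) := by
  rw [Ring.lie_def]
  calc Q * (Q * Y - Y * Q) * (1 - Q) = (Q * Q) * Y * (1 - Q) - Q * Y * (Q * (1 - Q)) := by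
        noncomm_ring
    _ = Q * Y * (1 - Q) := by rw [hQ.eq, hQ.mul_one_sub_self, mul_zero, sub_zero]

theorem IsIdempotentElem.one_sub_mul_lie_mul {Q : A} (hQ : IsIdempotentElem Q) (Y : A) :
    (1 - Q) * ⁅Q, Y⁆ * Q = -((1 - Q) * Y * Q) := by
  rw [Ring.lie_def]
  calc (1 - Q) * (Q * Y - Y * Q) * Q = ((1 - Q) * Q) * Y * Q - (1 - Q) * Y * (Q * Q) := by
        noncomm_ring
    _ = -((1 - Q) * Y * Q) := by rw [hQ.eq, hQ.one_sub_mul_self, zero_mul, zero_mul, zero_sub]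

theorem mul_mul_eq_zero_of_eq_mul_mul {P R B : A} (hRP : R * P = 0) (hB : B = P * B * R) :
    R * B * P = 0 := by
  rw [hB]
  calc R * (P * B * R) * P = (R * P) * B * (R * P) := by noncomm_ring
    _ = 0 := by rw [hRP, zero_mul, zero_mul]

theorem eq_of_lie_eq_of_mem_corner {H P R B C : A} (hRP : R * P = 0)
    (hinj : ∀ D : A, D = P * D * R + R * D * P → ⁅H, D⁆ = 0 → D = 0)
    (hB : B = P * B * R) (hC : C = P * C * R) (h : ⁅H, B⁆ = ⁅H, C⁆) : B = C := by
  have hoff : B - C = P * (B - C) * R + R * (B - C) * P := by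
    rw [mul_sub, sub_mul, mul_sub, sub_mul, ← hB, ← hC, mul_mul_eq_zero_of_eq_mul_mul hRP hB,
      mul_mul_eq_zero_of_eq_mul_mul hRP hC, sub_zero, add_zero]
  exact sub_eq_zero.mp (hinj (B - C) hoff (by rw [lie_sub, h, sub_self]))

theorem eq_smul_of_smul_lie_eq_lie {𝕜 : Type*} [Field 𝕜] [Algebra 𝕜 A] {c : 𝕜} (hc : c ≠ 0)
    {H P R B : A} (hP : IsIdempotentElem P) (hR : IsIdempotentElem R) (hRP : R * P = 0)
    (hinj : ∀ D : A, D = P * D * R + R * D * P → ⁅H, D⁆ = 0 → D = 0)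
    (hB : B = P * B * R) {Y : A} (h : c • ⁅H, B⁆ = ⁅H, P * Y * R⁆) :
    B = c⁻¹ • (P * Y * R) := by
  refine eq_of_lie_eq_of_mem_corner hRP hinj hB ?_ ?_
  · rw [mul_smul_comm, smul_mul_assoc]
    congr 1
    symm
    calc P * (P * Y * R) * R = (P * P) * Y * (R * R) := by noncomm_ring
      _ = P * Y * R := by rw [hP.eq, hR.eq]
  · rw [LieAlgebra.lie_smul, ← h, smul_smul, inv_mul_cancel₀ hc, one_smul]

end Corner

theorem offdiagonal_inverse_liouvillian_general
    (A : Type*) [Ring A] [Algebra ℂ A]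
    (ℏ : ℝ) (hℏ : ℏ ≠ 0)
    (d : A → A)
    (hleib : ∀ x y : A, d (x * y) = d x * y + x * d y)
    (Hop PF : A)
    (hP2 : PF * PF = PF)
    (hcomm : Hop * PF = PF * Hop)
    (hinj : ∀ B : A, B = PF * B * (1 - PF) + (1 - PF) * B * PF →
      Hop * B - B * Hop = 0 → B = 0) :
    (∀ B : A, B = PF * B * (1 - PF) →
        (Complex.I / (ℏ : ℂ)) • (Hop * B - B * Hop) = PF * d Hop * (1 - PF) →
        B = (-(Complex.I * (ℏ : ℂ))) • (PF * d PF * (1 - PF))) ∧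
    (∀ B : A, B = (1 - PF) * B * PF →
        (Complex.I / (ℏ : ℂ)) • (Hop * B - B * Hop) = (1 - PF) * d Hop * PF →
        B = (Complex.I * (ℏ : ℂ)) • ((1 - PF) * d PF * PF)) := by
  simp only [← Ring.lie_def] at hinj ⊢
  have hP : IsIdempotentElem PF := hP2
  have hH : Commute Hop PF := hcomm
  have hH' : Commute Hop (1 - PF) := (Commute.one_right Hop).sub_right hH
  have hc : Complex.I / (ℏ : ℂ) ≠ 0 := div_ne_zero Complex.I_ne_zero (by exact_mod_cast hℏ)
  have hc_inv : (Complex.I / (ℏ : ℂ))⁻¹ = -(Complex.I * ℏ) := by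
    rw [inv_div, Complex.div_I, mul_comm]
  have hderiv := lie_deriv_eq_of_commute hleib hH
  refine ⟨fun B hB hL => ?_, fun B hB hL => ?_⟩
  · rw [← hc_inv]
    refine eq_smul_of_smul_lie_eq_lie hc hP hP.one_sub hP.one_sub_mul_self hinj hB ?_
    rw [hL, lie_mul_mul_of_commute hH hH', hderiv, hP.mul_lie_mul_one_sub]
  · rw [← neg_neg (Complex.I * ℏ), ← hc_inv, ← inv_neg]
    refine eq_smul_of_smul_lie_eq_lie (neg_ne_zero.mpr hc) hP.one_sub hP hP.mul_one_sub_self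
      (fun D hD => hinj D (hD.trans (add_comm _ _))) hB ?_
    rw [neg_smul, hL, lie_mul_mul_of_commute hH' hH, hderiv, hP.one_sub_mul_lie_mul]

/-- Let `H` be a bounded self-adjoint operator, `E_F` not an eigenvalue of `H`,
and `P_F` the spectral projection of `H` on energies `≤ E_F` (so `P_F` is a self-adjoint
idempotent commuting with `H`).  Let `∂` be a derivation and `L_H(A) = (i/ℏ)[H,A]`.  The
hypothesis that `E_F` is not an eigenvalue is encoded as injectivity of `L_H` on off-diagonal
operators.  Then the unique off-diagonal solutions of `L_H(B) = P_F (∂H) (1-P_F)` resp.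
`L_H(B) = (1-P_F)(∂H)P_F` are
`P_F L_H⁻¹(∂H)(1-P_F) = -iℏ·P_F (∂P_F)(1-P_F)` and
`(1-P_F) L_H⁻¹(∂H) P_F = iℏ·(1-P_F)(∂P_F) P_F`. -/
theorem offdiagonal_inverse_liouvillian
    (A : Type*) [Ring A] [Algebra ℂ A] [StarRing A]
    (ℏ : ℝ) (hℏ : ℏ ≠ 0)
    (d : A → A)
    (hadd : ∀ x y : A, d (x + y) = d x + d y)
    (hleib : ∀ x y : A, d (x * y) = d x * y + x * d y)
    (Hop PF : A)
    (hHsa : star Hop = Hop)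
    (hP2 : PF * PF = PF) (hPsa : star PF = PF)
    (hcomm : Hop * PF = PF * Hop)
    (hinj : ∀ B : A, B = PF * B * (1 - PF) + (1 - PF) * B * PF →
      Hop * B - B * Hop = 0 → B = 0) :
    (∀ B : A, B = PF * B * (1 - PF) →
        (Complex.I / (ℏ : ℂ)) • (Hop * B - B * Hop) = PF * d Hop * (1 - PF) →
        B = (-(Complex.I * (ℏ : ℂ))) • (PF * d PF * (1 - PF))) ∧
    (∀ B : A, B = (1 - PF) * B * PF →
        (Complex.I / (ℏ : ℂ)) • (Hop * B - B * Hop) = (1 - PF) * d Hop * PF →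
        B = (Complex.I * (ℏ : ℂ)) • ((1 - PF) * d PF * PF)) :=
  offdiagonal_inverse_liouvillian_general A ℏ hℏ d hleib Hop PF hP2 hcomm hinj
end

section
/- Let H_ω be a covariant ergodic family of self-adjoint operators on ℓ²(ℤ^D) with density of states measure N. If λ ∈ ℝ is a growth point of N (i.e. N((λ-ε, λ+ε)) > 0 for every ε > 0), then λ ∈ spec(H_ω) for P-almost every ω; if λ is not a growth point of N, then λ ∉ spec(H_ω) for P-almost every ω. -/
/-!
Covariance gives `‖E_ω(Δ) δ_m‖ = ‖E_{T_{-m} ω}(Δ) δ_0‖`, so by measure preservation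
`E_ω(Δ) δ_0 = 0` almost surely forces `E_ω(Δ) δ_m = 0` for all `m` almost surely: `N(Δ) = 0`
iff `E_ω(Δ) = 0` almost surely. The event `{E_ω(Δ) = 0}` is translation invariant, hence has
probability `0` or `1`. At a growth point every interval `(λ - 1/(n+1), λ + 1/(n+1))` thus meets
the spectrum almost surely, and `λ` lies in the closed spectrum; otherwise some interval around
`λ` carries no density of states, and almost surely misses the spectrum.
-/

open MeasureTheory
noncomputable section

/-- The lattice `ℤ^D`. -/
abbrev ZLat (D : ℕ) := Fin D → ℤ

instance : Fact ((1 : ENNReal) ≤ 2) := ⟨one_le_two⟩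

/-- The Hilbert space `ℓ²(ℤ^D)`. -/
abbrev L2 (D : ℕ) := lp (fun _ : ZLat D => ℂ) 2

/-- The standard basis vector `δ_n` of `ℓ²(ℤ^D)`. -/
def delta (D : ℕ) (n : ZLat D) : L2 D := lp.single 2 n 1

theorem eq_zero_iff_forall_apply_delta {D : ℕ} {F : Type*} [NormedAddCommGroup F]
    [NormedSpace ℂ F] (A : L2 D →L[ℂ] F) : A = 0 ↔ ∀ n, A (delta D n) = 0 := by
  refine ⟨fun h n => by simp [h], fun h => lp.ext_continuousLinearMap (by norm_num) fun n => ?_⟩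
  exact ContinuousLinearMap.ext_ring (by simpa [delta] using h n)

theorem ae_mem_or_ae_notMem_of_invariant {ι Ω : Type*} [MeasurableSpace Ω] {P : Measure Ω}
    [IsProbabilityMeasure P] {T : ι → Ω → Ω}
    (herg : ∀ s : Set Ω, MeasurableSet s → (∀ a, T a ⁻¹' s = s) → P s = 0 ∨ P s = 1)
    {s : Set Ω} (hs : MeasurableSet s) (hinv : ∀ a, T a ⁻¹' s = s) :
    (∀ᵐ ω ∂P, ω ∈ s) ∨ ∀ᵐ ω ∂P, ω ∉ s := by
  rw [ae_mem_iff_measure_eq hs.nullMeasurableSet, measure_univ, ← measure_eq_zero_iff_ae_notMem]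
  exact (herg s hs hinv).symm

theorem lintegral_nnnorm_sq_eq_zero_iff {Ω F : Type*} [MeasurableSpace Ω] {P : Measure Ω}
    [NormedAddCommGroup F] {f : Ω → F} (hf : Measurable fun ω => ‖f ω‖) :
    ∫⁻ ω, (‖f ω‖₊ : ENNReal) ^ 2 ∂P = 0 ↔ ∀ᵐ ω ∂P, f ω = 0 := by
  have hmeas : Measurable fun ω => (‖f ω‖₊ : ENNReal) ^ 2 := by
    simpa only [ofReal_norm, enorm_eq_nnnorm] using hf.ennreal_ofReal.pow_const 2
  simp [lintegral_eq_zero_iff hmeas, Filter.EventuallyEq]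

theorem ofReal_mem_of_forall_inter_Ioo_nonempty {s : Set ℂ} (hs : IsClosed s) {x : ℝ}
    (h : ∀ n : ℕ, (s ∩ Complex.ofReal '' Set.Ioo (x - 1 / (n + 1)) (x + 1 / (n + 1))).Nonempty) :
    (x : ℂ) ∈ s := by
  rw [← hs.closure_eq, mem_closure_iff_nhds_basis Metric.nhds_basis_ball_inv_nat_succ]
  intro n _
  obtain ⟨_, hmem, t, ht, rfl⟩ := h n
  refine ⟨t, hmem, ?_⟩
  rw [Metric.mem_ball, Complex.dist_eq, ← Complex.ofReal_sub, Complex.norm_real, Real.norm_eq_abs,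
    abs_sub_lt_iff]
  constructor <;> linarith [ht.1, ht.2]

section Covariant

variable {D : ℕ} {Ω F : Type*} [NormedAddCommGroup F] [NormedSpace ℂ F]
  {T : ZLat D → Ω → Ω} {A : Ω → L2 D →L[ℂ] F}

theorem apply_delta_eq_zero_iff_of_covariant
    (hcov : ∀ a ω n, ‖A (T a ω) (delta D (n + a))‖ = ‖A ω (delta D n)‖) (ω : Ω) (m : ZLat D) :
    A ω (delta D m) = 0 ↔ A (T (-m) ω) (delta D 0) = 0 := by
  rw [← norm_eq_zero, ← hcov (-m) ω m, add_neg_cancel, norm_eq_zero]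

theorem setOf_eq_zero_eq_iInter_preimage
    (hcov : ∀ a ω n, ‖A (T a ω) (delta D (n + a))‖ = ‖A ω (delta D n)‖) :
    {ω | A ω = 0} = ⋂ m, T (-m) ⁻¹' {ω | A ω (delta D 0) = 0} := by
  ext ω
  simp only [Set.mem_iInter, Set.mem_preimage, Set.mem_ofPred_eq, eq_zero_iff_forall_apply_delta]
  exact forall_congr' (apply_delta_eq_zero_iff_of_covariant hcov ω)

theorem preimage_setOf_eq_zero_of_covariant
    (hcov : ∀ a ω n, ‖A (T a ω) (delta D (n + a))‖ = ‖A ω (delta D n)‖) (a : ZLat D) :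
    T a ⁻¹' {ω | A ω = 0} = {ω | A ω = 0} := by
  ext ω
  simp only [Set.mem_preimage, Set.mem_ofPred_eq, eq_zero_iff_forall_apply_delta]
  refine (Equiv.addRight a).forall_congr_right.symm.trans (forall_congr' fun n => ?_)
  rw [Equiv.coe_addRight, ← norm_eq_zero, hcov, norm_eq_zero]

theorem measurableSet_setOf_eq_zero_of_covariant [MeasurableSpace Ω] (hT : ∀ a, Measurable (T a))
    (hcov : ∀ a ω n, ‖A (T a ω) (delta D (n + a))‖ = ‖A ω (delta D n)‖)
    (hmeas : Measurable fun ω => ‖A ω (delta D 0)‖) : MeasurableSet {ω | A ω = 0} := by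
  have h0 : MeasurableSet {ω | A ω (delta D 0) = 0} := by
    simpa only [Set.preimage, Set.mem_singleton_iff, norm_eq_zero] using
      hmeas (measurableSet_singleton 0)
  rw [setOf_eq_zero_eq_iInter_preimage hcov]
  exact .iInter fun m => hT (-m) h0

theorem ae_eq_zero_iff_of_covariant [MeasurableSpace Ω] {P : Measure Ω}
    (hT : ∀ a, Measure.QuasiMeasurePreserving (T a) P P)
    (hcov : ∀ a ω n, ‖A (T a ω) (delta D (n + a))‖ = ‖A ω (delta D n)‖) :
    (∀ᵐ ω ∂P, A ω = 0) ↔ ∀ᵐ ω ∂P, A ω (delta D 0) = 0 := by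
  refine ⟨fun h => h.mono fun ω hω => by simp [hω], fun h => ?_⟩
  filter_upwards [ae_all_iff.2 fun m => (hT (-m)).ae h] with ω hω
  exact (eq_zero_iff_forall_apply_delta _).2 fun m =>
    (apply_delta_eq_zero_iff_of_covariant hcov ω m).2 (hω m)

theorem lintegral_nnnorm_apply_delta_sq_eq_zero_iff [MeasurableSpace Ω] {P : Measure Ω}
    (hT : ∀ a, MeasurePreserving (T a) P P)
    (hcov : ∀ a ω n, ‖A (T a ω) (delta D (n + a))‖ = ‖A ω (delta D n)‖)
    (hmeas : Measurable fun ω => ‖A ω (delta D 0)‖) :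
    ∫⁻ ω, (‖A ω (delta D 0)‖₊ : ENNReal) ^ 2 ∂P = 0 ↔ ∀ᵐ ω ∂P, A ω = 0 := by
  rw [lintegral_nnnorm_sq_eq_zero_iff hmeas,
    ← ae_eq_zero_iff_of_covariant (fun a => (hT a).quasiMeasurePreserving) hcov]

theorem ae_ne_zero_of_not_ae_eq_zero_of_covariant [MeasurableSpace Ω] {P : Measure Ω}
    [IsProbabilityMeasure P] (hT : ∀ a, Measurable (T a))
    (herg : ∀ s : Set Ω, MeasurableSet s → (∀ a, T a ⁻¹' s = s) → P s = 0 ∨ P s = 1)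
    (hcov : ∀ a ω n, ‖A (T a ω) (delta D (n + a))‖ = ‖A ω (delta D n)‖)
    (hmeas : Measurable fun ω => ‖A ω (delta D 0)‖) (h : ¬ ∀ᵐ ω ∂P, A ω = 0) :
    ∀ᵐ ω ∂P, A ω ≠ 0 :=
  (ae_mem_or_ae_notMem_of_invariant herg (measurableSet_setOf_eq_zero_of_covariant hT hcov hmeas)
    (preimage_setOf_eq_zero_of_covariant hcov)).resolve_left h

end Covariant

theorem dos_growth_point_iff_in_spectrum_general
    (D : ℕ) {Ω : Type*} [MeasurableSpace Ω]
    (P : Measure Ω) [IsProbabilityMeasure P]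
    (T : ZLat D → Ω → Ω)
    (hmp : ∀ a : ZLat D, MeasurePreserving (T a) P P)
    (herg : ∀ s : Set Ω, MeasurableSet s → (∀ a : ZLat D, T a ⁻¹' s = s) →
      P s = 0 ∨ P s = 1)
    (Hf : Ω → (L2 D →L[ℂ] L2 D))
    (E : Ω → Set ℝ → (L2 D →L[ℂ] L2 D))
    (hEspec : ∀ (ω : Ω) (Δ : Set ℝ), IsOpen Δ →
      (E ω Δ = 0 ↔ spectrum ℂ (Hf ω) ∩ (Complex.ofReal '' Δ) = ∅))
    (hEcov : ∀ (a : ZLat D) (ω : Ω) (Δ : Set ℝ) (n : ZLat D),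
      ‖E (T a ω) Δ (delta D (n + a))‖ = ‖E ω Δ (delta D n)‖)
    (hEmeas : ∀ Δ : Set ℝ, MeasurableSet Δ →
      Measurable fun ω => ‖E ω Δ (delta D 0)‖)
    (N : Measure ℝ)
    (hN : ∀ Δ : Set ℝ, MeasurableSet Δ →
      N Δ = ∫⁻ ω, ((‖E ω Δ (delta D 0)‖₊ : ENNReal) ^ 2) ∂P)
    (lam : ℝ) :
    ((∀ ε : ℝ, 0 < ε → 0 < N (Set.Ioo (lam - ε) (lam + ε))) →
        ∀ᵐ ω ∂P, (lam : ℂ) ∈ spectrum ℂ (Hf ω)) ∧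
    ((¬ ∀ ε : ℝ, 0 < ε → 0 < N (Set.Ioo (lam - ε) (lam + ε))) →
        ∀ᵐ ω ∂P, (lam : ℂ) ∉ spectrum ℂ (Hf ω)) := by
  have hdos : ∀ Δ, MeasurableSet Δ → (N Δ = 0 ↔ ∀ᵐ ω ∂P, E ω Δ = 0) := fun Δ hΔ => by
    rw [hN Δ hΔ]
    exact lintegral_nnnorm_apply_delta_sq_eq_zero_iff hmp (hEcov · · Δ) (hEmeas Δ hΔ)
  have hspec : ∀ ω Δ, IsOpen Δ →
      (E ω Δ ≠ 0 ↔ (spectrum ℂ (Hf ω) ∩ Complex.ofReal '' Δ).Nonempty) := fun ω Δ hΔ => by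
    rw [Set.nonempty_iff_ne_empty, ne_eq, hEspec ω Δ hΔ]
  refine ⟨fun hgrowth => ?_, fun hng => ?_⟩
  · have hne : ∀ n : ℕ, ∀ᵐ ω ∂P, E ω (Set.Ioo (lam - 1 / (n + 1)) (lam + 1 / (n + 1))) ≠ 0 :=
      fun n => ae_ne_zero_of_not_ae_eq_zero_of_covariant (fun a => (hmp a).measurable) herg
        (hEcov · · _) (hEmeas _ measurableSet_Ioo)
        fun h => (hgrowth _ (by positivity)).ne' ((hdos _ measurableSet_Ioo).2 h)
    filter_upwards [ae_all_iff.2 hne] with ω hω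
    exact ofReal_mem_of_forall_inter_Ioo_nonempty (spectrum.isClosed _) fun n =>
      (hspec ω _ isOpen_Ioo).1 (hω n)
  · obtain ⟨ε, hε, hNε⟩ : ∃ ε : ℝ, 0 < ε ∧ N (Set.Ioo (lam - ε) (lam + ε)) = 0 := by
      simpa using hng
    filter_upwards [(hdos _ measurableSet_Ioo).1 hNε] with ω hω hmem
    exact (hspec ω _ isOpen_Ioo).2 ⟨lam, hmem, lam, ⟨by linarith, by linarith⟩, rfl⟩ hω

/-- Pastur: let `ω ↦ H_ω` be a covariant ergodic family of bounded
self-adjoint operators on `ℓ²(ℤ^D)`, with spectral projections `E_ω(Δ)` (vanishing on an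
open set `Δ` iff the spectrum avoids `Δ`) and density of states measure
`N(Δ) = ∫ ⟨0|E_ω(Δ)|0⟩ dP(ω)`.  If `λ` is a growth point of `N` then
`λ ∈ spec(H_ω)` for `P`-a.e. `ω`; if `λ` is not a growth point of `N` then
`λ ∉ spec(H_ω)` for `P`-a.e. `ω`. -/
theorem dos_growth_point_iff_in_spectrum
    (D : ℕ) {Ω : Type*} [MeasurableSpace Ω]
    (P : Measure Ω) [IsProbabilityMeasure P]
    (T : ZLat D → Ω → Ω)
    (hT0 : T 0 = id)
    (hTadd : ∀ a b : ZLat D, T (a + b) = T a ∘ T b)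
    (hmp : ∀ a : ZLat D, MeasurePreserving (T a) P P)
    (herg : ∀ s : Set Ω, MeasurableSet s → (∀ a : ZLat D, T a ⁻¹' s = s) →
      P s = 0 ∨ P s = 1)
    (Hf : Ω → (L2 D →L[ℂ] L2 D))
    (hsa : ∀ ω, star (Hf ω) = Hf ω)
    (E : Ω → Set ℝ → (L2 D →L[ℂ] L2 D))
    (hEproj : ∀ ω Δ, E ω Δ * E ω Δ = E ω Δ ∧ star (E ω Δ) = E ω Δ)
    (hEspec : ∀ (ω : Ω) (Δ : Set ℝ), IsOpen Δ →
      (E ω Δ = 0 ↔ spectrum ℂ (Hf ω) ∩ (Complex.ofReal '' Δ) = ∅))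
    (hEcov : ∀ (a : ZLat D) (ω : Ω) (Δ : Set ℝ) (n : ZLat D),
      ‖E (T a ω) Δ (delta D (n + a))‖ = ‖E ω Δ (delta D n)‖)
    (hEmeas : ∀ Δ : Set ℝ, MeasurableSet Δ →
      Measurable fun ω => ‖E ω Δ (delta D 0)‖)
    (hspecmeas : ∀ lam : ℝ, MeasurableSet {ω : Ω | (lam : ℂ) ∈ spectrum ℂ (Hf ω)})
    (N : Measure ℝ)
    (hN : ∀ Δ : Set ℝ, MeasurableSet Δ →
      N Δ = ∫⁻ ω, ((‖E ω Δ (delta D 0)‖₊ : ENNReal) ^ 2) ∂P)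
    (lam : ℝ) :
    ((∀ ε : ℝ, 0 < ε → 0 < N (Set.Ioo (lam - ε) (lam + ε))) →
        ∀ᵐ ω ∂P, (lam : ℂ) ∈ spectrum ℂ (Hf ω)) ∧
    ((¬ ∀ ε : ℝ, 0 < ε → 0 < N (Set.Ioo (lam - ε) (lam + ε))) →
        ∀ᵐ ω ∂P, (lam : ℂ) ∉ spectrum ℂ (Hf ω)) :=
  dos_growth_point_iff_in_spectrum_general D P T hmp herg Hf E hEspec hEcov hEmeas N hN lam
end
end

section
/- Let Δ = Δ₁ ∪ Δ₂ with Δ₁ ∩ Δ₂ = ∅ be Borel sets and P_{Δ₁}, P_{Δ₂} the corresponding mutually orthogonal spectral projections of a self-adjoint element H of a von Neumann algebra with faithful normal trace T and commuting *-derivation ∇ for which T is invariant. Then T(|∇P_{Δ₁∪Δ₂}|²) ≤ T(|∇P_{Δ₁}|²) + T(|∇P_{Δ₂}|²); more precisely, the cross term satisfies T(∇P_{Δ₁}·∇P_{Δ₂}) = -T(|∇P_{Δ₂}P_{Δ₁}|²) - T(|∇P_{Δ₁}P_{Δ₂}|²) ≤ 0. -/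
lemma sobolev_cross_key
    (M : Type*) [Ring M] [Algebra ℂ M] [StarRing M]
    (τ : M →ₗ[ℂ] ℂ)
    (htr : ∀ x y : M, τ (x * y) = τ (y * x))
    (D : M → M)
    (hleib : ∀ x y : M, D (x * y) = D x * y + x * D y)
    (hstar : ∀ x : M, D (star x) = star (D x))
    (P₁ P₂ : M)
    (hP₁ : P₁ * P₁ = P₁) (hP₁sa : star P₁ = P₁)
    (hP₂ : P₂ * P₂ = P₂) (hP₂sa : star P₂ = P₂)
    (horth : P₁ * P₂ = 0) (horth' : P₂ * P₁ = 0) :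
    τ (D P₁ * D P₂)
      = -(τ (star (D P₂ * P₁) * (D P₂ * P₁))) - τ (star (D P₁ * P₂) * (D P₁ * P₂)) := by
  have hD0 : D 0 = 0 := by
    have h := hleib 0 0
    simpa using h
  have hB : star (D P₂) = D P₂ := by
    have h := hstar P₂; rw [hP₂sa] at h; exact h.symm
  have rel1 : D P₁ * P₂ = -(P₁ * D P₂) := by
    have h := hleib P₁ P₂
    rw [horth, hD0] at h
    exact eq_neg_of_add_eq_zero_left h.symm
  have rel2 : P₂ * D P₁ = -(D P₂ * P₁) := by
    have h := hleib P₂ P₁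
    rw [horth', hD0] at h
    exact eq_neg_of_add_eq_zero_right h.symm
  have hBdec : D P₂ = D P₂ * P₂ + P₂ * D P₂ := by
    have h := hleib P₂ P₂; rwa [hP₂] at h
  set A := D P₁
  set B := D P₂
  have c1 : τ (B * P₁ * B) = τ (B * B * P₁) := by
    rw [htr (B * P₁) B, ← mul_assoc]
  have c2 : τ (P₁ * (B * B)) = τ (B * B * P₁) := htr _ _
  have eprod : B * P₁ * (P₁ * B) = B * P₁ * B := by
    rw [← mul_assoc, mul_assoc B P₁ P₁, hP₁]
  have t1 : τ (star (B * P₁) * (B * P₁)) = τ (B * B * P₁) := by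
    rw [star_mul, hP₁sa, hB, htr, eprod, c1]
  have t2 : τ (star (A * P₂) * (A * P₂)) = τ (B * B * P₁) := by
    rw [rel1, star_neg, neg_mul, mul_neg, neg_neg, star_mul, hP₁sa, hB, eprod, c1]
  have h2 : τ (A * B * P₂) = -τ (B * B * P₁) := by
    rw [htr (A * B) P₂, ← mul_assoc, rel2, neg_mul, map_neg, c1]
  have h3 : τ (A * P₂ * B) = -τ (B * B * P₁) := by
    rw [rel1, neg_mul, map_neg, mul_assoc, c2]
  have h1 : A * B = A * B * P₂ + A * P₂ * B := by
    conv_lhs => rw [hBdec]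
    rw [mul_add, ← mul_assoc, ← mul_assoc]
  rw [h1, map_add, h2, h3, t1, t2]
  ring


/-- Let `M` be a (von Neumann-type) *-algebra with a tracial positive linear
functional `τ` which is invariant for the commuting *-derivations `∂₁, ∂₂` forming the
gradient `∇ = (∂₁, ∂₂)` (invariance: `τ ∘ ∂ᵢ = 0`).  For mutually orthogonal self-adjoint
projections `P₁, P₂` (spectral projections of disjoint Borel sets `Δ₁, Δ₂`), the cross term
satisfies `𝒯(∇P₁·∇P₂) = -𝒯(|∇P₂ P₁|²) - 𝒯(|∇P₁ P₂|²) ≤ 0`, and consequently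
`𝒯(|∇P_{Δ₁∪Δ₂}|²) ≤ 𝒯(|∇P_{Δ₁}|²) + 𝒯(|∇P_{Δ₂}|²)` where `P_{Δ₁∪Δ₂} = P₁ + P₂`. -/
theorem sobolev_superadditive
    (M : Type*) [Ring M] [Algebra ℂ M] [StarRing M]
    (τ : M →ₗ[ℂ] ℂ)
    (htracial : ∀ x y : M, τ (x * y) = τ (y * x))
    (hpos : ∀ x : M, 0 ≤ (τ (star x * x)).re ∧ (τ (star x * x)).im = 0)
    (d : Fin 2 → M → M)
    (hadd : ∀ i, ∀ x y : M, d i (x + y) = d i x + d i y)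
    (hleib : ∀ i, ∀ x y : M, d i (x * y) = d i x * y + x * d i y)
    (hstar : ∀ i, ∀ x : M, d i (star x) = star (d i x))
    (hinv : ∀ i, ∀ x : M, τ (d i x) = 0)
    (P₁ P₂ : M)
    (hP₁ : P₁ * P₁ = P₁) (hP₁sa : star P₁ = P₁)
    (hP₂ : P₂ * P₂ = P₂) (hP₂sa : star P₂ = P₂)
    (horth : P₁ * P₂ = 0) (horth' : P₂ * P₁ = 0) :
    (∑ i : Fin 2, τ (d i P₁ * d i P₂))
        = -(∑ i : Fin 2, τ (star (d i P₂ * P₁) * (d i P₂ * P₁)))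
          - (∑ i : Fin 2, τ (star (d i P₁ * P₂) * (d i P₁ * P₂))) ∧
    (∑ i : Fin 2, τ (d i P₁ * d i P₂)).re ≤ 0 ∧
    (∑ i : Fin 2, τ (star (d i (P₁ + P₂)) * d i (P₁ + P₂))).re
      ≤ (∑ i : Fin 2, τ (star (d i P₁) * d i P₁)).re
        + (∑ i : Fin 2, τ (star (d i P₂) * d i P₂)).re := by
  have e : ∀ i, τ (d i P₁ * d i P₂)
      = -(τ (star (d i P₂ * P₁) * (d i P₂ * P₁))) - τ (star (d i P₁ * P₂) * (d i P₁ * P₂)) :=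
    fun i => sobolev_cross_key M τ htracial (d i) (hleib i) (hstar i) P₁ P₂
      hP₁ hP₁sa hP₂ hP₂sa horth horth'
  have first : (∑ i : Fin 2, τ (d i P₁ * d i P₂))
      = -(∑ i : Fin 2, τ (star (d i P₂ * P₁) * (d i P₂ * P₁)))
        - (∑ i : Fin 2, τ (star (d i P₁ * P₂) * (d i P₁ * P₂))) := by
    simp only [Fin.sum_univ_two, e 0, e 1]
    ring
  have n1 := (hpos (d 0 P₂ * P₁)).1
  have n2 := (hpos (d 1 P₂ * P₁)).1
  have n3 := (hpos (d 0 P₁ * P₂)).1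
  have n4 := (hpos (d 1 P₁ * P₂)).1
  have second : (∑ i : Fin 2, τ (d i P₁ * d i P₂)).re ≤ 0 := by
    rw [first]
    simp only [Fin.sum_univ_two, Complex.sub_re, Complex.neg_re, Complex.add_re]
    linarith
  refine ⟨first, second, ?_⟩
  have hA : ∀ i, star (d i P₁) = d i P₁ := fun i => by
    have h := hstar i P₁; rw [hP₁sa] at h; exact h.symm
  have hB : ∀ i, star (d i P₂) = d i P₂ := fun i => by
    have h := hstar i P₂; rw [hP₂sa] at h; exact h.symm
  have expand : ∀ i, τ (star (d i (P₁ + P₂)) * d i (P₁ + P₂))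
      = τ (star (d i P₁) * d i P₁) + τ (star (d i P₂) * d i P₂)
        + 2 * τ (d i P₁ * d i P₂) := by
    intro i
    rw [hadd i, star_add, hA i, hB i, add_mul, mul_add, mul_add, map_add, map_add, map_add,
      htracial (d i P₂) (d i P₁)]
    ring
  simp only [Fin.sum_univ_two, expand 0, expand 1] at *
  simp only [Complex.add_re, Complex.mul_re, Complex.re_ofNat, Complex.im_ofNat] at *
  linarith
end
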